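/- Let G=(V,E) be a graph with three distinguished vertices x,y,z and capacity function c:E→ℤ₊. Let τ_x be the minimum capacity of an (x,{z,y})-cut, τ_y the minimum capacity of an ({x,z},y)-cut, and τ the minimum capacity of an x–y cut. Then τ = min{τ_x, τ_y}. Furthermore, there exist (i) an integral (x,{z,y})-flow f, an integral x–y flow f1, and an integral x–z flow f2 in (D,c) such that val(f)=div_f(x)=τ_x, val(f1)=−div_f(y)=τ, val(f2)=−div_f(z)=τ_x−τ, and f(a)=f1(a)+f2(a) for every arc a of D; and (ii) an integral ({x,z},y)-flow g, an integral x–y flow g1, and an integral z–y flow g2 in (D,c) such that val(g)=−div_g(y)=τ_y, val(g1)=div_g(x)=τ, val(g2)=div_g(z)=τ_y−τ, and g(a)=g1(a)+g2(a) for every arc a of D. -/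

import Mathlib

open SimpleGraph

-- ============ Minors and planarity ============

/-- `H` is a minor of `G`, witnessed by disjoint connected branch sets. -/
def HasGraphMinor {V W : Type} (G : SimpleGraph V) (H : SimpleGraph W) : Prop :=
  ∃ B : W → Set V,
    (∀ w, (G.induce (B w)).Connected) ∧
    (∀ w₁ w₂, w₁ ≠ w₂ → Disjoint (B w₁) (B w₂)) ∧
    (∀ w₁ w₂, H.Adj w₁ w₂ → ∃ a ∈ B w₁, ∃ b ∈ B w₂, G.Adj a b)

/-- Planarity, via Wagner's characterization: no `K₅` minor and no `K₃,₃` minor. -/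
def IsPlanar {V : Type} (G : SimpleGraph V) : Prop :=
  ¬ HasGraphMinor G (⊤ : SimpleGraph (Fin 5)) ∧
  ¬ HasGraphMinor G (completeBipartiteGraph (Fin 3) (Fin 3))

def AdjBetween {V : Type} (G : SimpleGraph V) (A B : Set V) : Prop :=
  ∃ a ∈ A, ∃ b ∈ B, G.Adj a b

/-- Rooted branch sets: disjoint connected sets, the `i`-th one containing the root `r i`. -/
def RootedBranchSets {V : Type} (G : SimpleGraph V) (B : Fin 4 → Set V) (r : Fin 4 → V) : Prop :=
  (∀ i, r i ∈ B i) ∧ (∀ i, (G.induce (B i)).Connected) ∧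
  (∀ i j, i ≠ j → Disjoint (B i) (B j))

/-- A rooted minor isomorphic to the `4`-cycle `a b c d` (in this cyclic order). -/
def HasFMinorAux {V : Type} (G : SimpleGraph V) (a b c d : V) : Prop :=
  ∃ B : Fin 4 → Set V, RootedBranchSets G B ![a, b, c, d] ∧
    AdjBetween G (B 0) (B 1) ∧ AdjBetween G (B 1) (B 2) ∧
    AdjBetween G (B 2) (B 3) ∧ AdjBetween G (B 3) (B 0)

/-- `G` contains a subgraph contractible to `F` (the 4-cycle `s₁ s₂ t₁ t₂`, so that
`s₁t₁` and `s₂t₂` are the diagonals), up to interchanging `s₁` with `t₁` and `s₂` with `t₂`. -/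
def HasFMinor {V : Type} (G : SimpleGraph V) (s₁ t₁ s₂ t₂ : V) : Prop :=
  HasFMinorAux G s₁ s₂ t₁ t₂ ∨ HasFMinorAux G t₁ s₂ s₁ t₂ ∨
  HasFMinorAux G s₁ t₂ t₁ s₂ ∨ HasFMinorAux G t₁ t₂ s₁ s₂

/-- A rooted `K₄`-minor on the roots `s₁,t₁,s₂,t₂` (this is the `K₄*`-minor containing the
specified edges `e₁ = s₁t₁` and `e₂ = s₂t₂`; it is symmetric under interchanging `s₁` with `t₁`
and `s₂` with `t₂`). -/
def HasK4starMinor {V : Type} (G : SimpleGraph V) (s₁ t₁ s₂ t₂ : V) : Prop :=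
  ∃ B : Fin 4 → Set V, RootedBranchSets G B ![s₁, t₁, s₂, t₂] ∧
    ∀ i j : Fin 4, i ≠ j → AdjBetween G (B i) (B j)

-- ============ Connectivity and separations ============

/-- `G` is `k`-connected: more than `k` vertices, and deleting fewer than `k` vertices
leaves a connected graph. -/
def IsKConnected {V : Type} (k : ℕ) (G : SimpleGraph V) : Prop :=
  k < Nat.card V ∧ ∀ S : Set V, S.ncard < k → (G.induce Sᶜ).Connected

/-- A separation of `G`: a pair of edge-disjoint non-spanning subgraphs whose union is `G`. -/
def IsSeparation {V : Type} (G : SimpleGraph V) (G₁ G₂ : G.Subgraph) : Prop :=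
  G₁ ⊔ G₂ = ⊤ ∧ Disjoint G₁.edgeSet G₂.edgeSet ∧
  G₁.verts ≠ Set.univ ∧ G₂.verts ≠ Set.univ

def IsKSeparation {V : Type} (G : SimpleGraph V) (G₁ G₂ : G.Subgraph) (k : ℕ) : Prop :=
  IsSeparation G G₁ G₂ ∧ (G₁.verts ∩ G₂.verts).ncard = k

/-- The separation `(G₁,G₂)` separates the edges `e₁` and `e₂` (each part contains
precisely one of them; with edge-disjointness this is the displayed condition). -/
def SeparatesEdgePair {V : Type} {G : SimpleGraph V} (G₁ G₂ : G.Subgraph) (e₁ e₂ : Sym2 V) : Prop :=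
  (e₁ ∈ G₁.edgeSet ∧ e₂ ∈ G₂.edgeSet ∧ e₁ ∉ G₂.edgeSet ∧ e₂ ∉ G₁.edgeSet) ∨
  (e₂ ∈ G₁.edgeSet ∧ e₁ ∈ G₂.edgeSet ∧ e₂ ∉ G₂.edgeSet ∧ e₁ ∉ G₁.edgeSet)

/-- A `k`-separation `(B₁,B₂)` of a subgraph `B` of `G`. -/
def IsSubgraphSeparation {V : Type} {G : SimpleGraph V} (B B₁ B₂ : G.Subgraph) (k : ℕ) : Prop :=
  B₁ ⊔ B₂ = B ∧ Disjoint B₁.edgeSet B₂.edgeSet ∧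
  B₁.verts ≠ B.verts ∧ B₂.verts ≠ B.verts ∧ (B₁.verts ∩ B₂.verts).ncard = k

/-- The separation `(B₁,B₂)` separates the vertex sets `U₁` and `U₂`
(each part contains precisely one of them). -/
def SeparatesSets {V : Type} {G : SimpleGraph V} (B₁ B₂ : G.Subgraph) (U₁ U₂ : Set V) : Prop :=
  (U₁ ⊆ B₁.verts ∧ U₂ ⊆ B₂.verts ∧ ¬ U₂ ⊆ B₁.verts ∧ ¬ U₁ ⊆ B₂.verts) ∨
  (U₂ ⊆ B₁.verts ∧ U₁ ⊆ B₂.verts ∧ ¬ U₁ ⊆ B₁.verts ∧ ¬ U₂ ⊆ B₂.verts)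

/-- `(G,Z)` is `4`-connected: every `k`-separation with `Z` inside the first part has
`k ≥ 4`, or `k = 3` and the second part has exactly `4` vertices. -/
def PairFourConnected {V : Type} (G : SimpleGraph V) (Z : Set V) : Prop :=
  ∀ (G₁ G₂ : G.Subgraph) (k : ℕ), IsKSeparation G G₁ G₂ k → Z ⊆ G₁.verts →
    4 ≤ k ∨ (k = 3 ∧ G₂.verts.ncard = 4)

-- ============ Bridges ============

/-- `K` is (the vertex set of) a connected component of `G` with the set `S` deleted. -/
def IsCompAway {V : Type} (G : SimpleGraph V) (S K : Set V) : Prop :=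
  Disjoint K S ∧ (G.induce K).Connected ∧
  ∀ u ∈ K, ∀ v, G.Adj u v → v ∉ S → v ∈ K

/-- The subgraph of `G` induced by the edges of the component `K` together with the
edges linking `K` to the rest of the graph. -/
def bridgeSubgraph {V : Type} (G : SimpleGraph V) (K : Set V) : G.Subgraph where
  verts := K ∪ {v | ∃ u ∈ K, G.Adj v u}
  Adj a b := G.Adj a b ∧ (a ∈ K ∨ b ∈ K)
  adj_sub h := h.1
  edge_vert := by
    rintro a b ⟨hab, ha | hb⟩
    · exact Or.inl ha
    · exact Or.inr ⟨b, hb, hab⟩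
  symm := ⟨fun a b h => ⟨h.1.symm, h.2.symm⟩⟩

/-- A trivial `H`-bridge of `G`: a single edge not in `H` with both ends in `H`. -/
def IsTrivialBridgeOf {V : Type} {G : SimpleGraph V} (H B : G.Subgraph) : Prop :=
  ∃ u v, ∃ h : G.Adj u v, u ∈ H.verts ∧ v ∈ H.verts ∧ s(u, v) ∉ H.edgeSet ∧
    B = G.subgraphOfAdj h

/-- An `H`-bridge of `G`. -/
def IsBridgeOf {V : Type} {G : SimpleGraph V} (H B : G.Subgraph) : Prop :=
  IsTrivialBridgeOf H B ∨
  ∃ K : Set V, IsCompAway G H.verts K ∧ B = bridgeSubgraph G K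

/-- The feet of an `H`-bridge `B`: its vertices lying in `H`. -/
def bridgeFeet {V : Type} {G : SimpleGraph V} (H B : G.Subgraph) : Set V :=
  B.verts ∩ H.verts

/-- `p` is a path contained in the subgraph `B`. -/
def PathIn {V : Type} {G : SimpleGraph V} (B : G.Subgraph) {a b : V} (p : G.Walk a b) : Prop :=
  p.IsPath ∧ (∀ v ∈ p.support, v ∈ B.verts) ∧ ∀ e ∈ p.edges, e ∈ B.edgeSet

/-- `B` contains two vertex-disjoint paths between `{s₁,t₁}` and `{s₂,t₂}`. -/
def TwoDisjointPathsIn {V : Type} {G : SimpleGraph V} (B : G.Subgraph) (s₁ t₁ s₂ t₂ : V) : Prop :=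
  ∃ (a₁ b₁ a₂ b₂ : V) (p₁ : G.Walk a₁ b₁) (p₂ : G.Walk a₂ b₂),
    ({a₁, a₂} : Set V) = {s₁, t₁} ∧ ({b₁, b₂} : Set V) = {s₂, t₂} ∧
    PathIn B p₁ ∧ PathIn B p₂ ∧ ∀ v ∈ p₁.support, v ∉ p₂.support

/-- The subgraph `M` formed by the edges `e₁ = s₁t₁` and `e₂ = s₂t₂` only. -/
def Msub {V : Type} (G : SimpleGraph V) {s₁ t₁ s₂ t₂ : V}
    (h₁ : G.Adj s₁ t₁) (h₂ : G.Adj s₂ t₂) : G.Subgraph :=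
  G.subgraphOfAdj h₁ ⊔ G.subgraphOfAdj h₂
-- ============ Cyclic orders and plane embeddings ============

/-- `target` occurs in this cyclic order on the cyclic list `l`
(up to rotation and reflection). -/
def InCyclicOrder {V : Type} (l target : List V) : Prop :=
  ∃ l' : List V, (List.IsRotated l l' ∨ List.IsRotated l.reverse l') ∧ target.Sublist l'

/-- The graph `H` augmented, for each index `i`, by a new apex vertex joined to all
vertices of `F i`.  Planarity of this augmented graph expresses that `H` has a planar
embedding in which each set `F i` lies on (the boundary of) a face. -/
def facesAugmented {V ι : Type} (H : SimpleGraph V) (F : ι → Set V) : SimpleGraph (V ⊕ ι) :=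
  SimpleGraph.fromRel (fun a b =>
    match a, b with
    | Sum.inl u, Sum.inl v => H.Adj u v
    | Sum.inl u, Sum.inr i => u ∈ F i
    | _, _ => False)

/-- `T` is the vertex set of a triangle of `H`. -/
def IsTriangle {V : Type} (H : SimpleGraph V) (T : Set V) : Prop :=
  ∃ x y z : V, H.Adj x y ∧ H.Adj y z ∧ H.Adj x z ∧ T = {x, y, z}

/-- The three edges of the triangle on `x, y, z`. -/
def triEdges3 {V : Type} (x y z : V) : Set (Sym2 V) := {s(x, y), s(y, z), s(x, z)}

/-- All edges spanned by the triangles in the collection `𝒯`. -/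
def closureEdges {V : Type} (𝒯 : Set (Set V)) : Set (Sym2 V) :=
  {e | ∃ T ∈ 𝒯, ∃ x ∈ T, ∃ y ∈ T, x ≠ y ∧ e = s(x, y)}

-- ============ 3-sums ============

/-- `K` is a component of `G` minus the base `H` all of whose attachments lie in `T`. -/
def AttachedComp {V : Type} (G H : SimpleGraph V) (T K : Set V) : Prop :=
  IsCompAway G H.support K ∧ ∀ u ∈ K, ∀ v, G.Adj u v → v ∈ H.support → v ∈ T

def summandVerts {V : Type} (G H : SimpleGraph V) (T : Set V) : Set V :=
  T ∪ ⋃₀ {K | AttachedComp G H T K}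

/-- The summand over the triangle `T`: the relevant part of `G` with the triangle `T`
completed. -/
def summandGraph {V : Type} (G : SimpleGraph V) (T W : Set V) : SimpleGraph V :=
  SimpleGraph.fromRel (fun a b => (G.Adj a b ∧ a ∈ W ∧ b ∈ W) ∨ (a ∈ T ∧ b ∈ T))

/-- `G` arises from the base graph `H` by `3`-summing `3`-connected graphs to the
triangles in `𝒯` (identifying triangles and deleting `0,1,2` or `3` of the identified
edges). -/
def ArisesBy3Sums {V : Type} (G H : SimpleGraph V) (𝒯 : Set (Set V)) : Prop :=
  (∀ T ∈ 𝒯, IsTriangle H T) ∧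
  (∀ a b, G.Adj a b → a ∈ H.support → b ∈ H.support → H.Adj a b) ∧
  (∀ a b, H.Adj a b → G.Adj a b ∨ ∃ T ∈ 𝒯, a ∈ T ∧ b ∈ T) ∧
  (∀ K, IsCompAway G H.support K → ∃ T ∈ 𝒯, AttachedComp G H T K) ∧
  (∀ T ∈ 𝒯, (∃ K, AttachedComp G H T K) →
    IsKConnected 3 ((summandGraph G T (summandVerts G H T)).induce (summandVerts G H T)))

-- ============ The structures (i)-(iv) ============

/-- Structure (i), with the base plane graph `H` and the triangle collection `𝒯`
exhibited:  `H` is `2`-connected and planar with the edges `s₁t₁` and `s₂t₂` on its outer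
facial cycle `C`, each `T ∈ 𝒯` is a facial triangle, and `G` arises from `H` by `3`-summing
`3`-connected graphs to the triangles in `𝒯`. -/
def StructureIWith {V : Type} (G : SimpleGraph V) (s₁ t₁ s₂ t₂ : V)
    (H : SimpleGraph V) (𝒯 : Set (Set V)) : Prop :=
  ∃ (w : V) (C : H.Walk w w),
    C.IsCycle ∧ s(s₁, t₁) ∈ C.edges ∧ s(s₂, t₂) ∈ C.edges ∧
    IsKConnected 2 (H.induce H.support) ∧
    IsPlanar (facesAugmented H (fun X : Option {T // T ∈ 𝒯} =>
      X.elim {v | v ∈ C.support} Subtype.val)) ∧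
    ArisesBy3Sums G H 𝒯

def StructureI {V : Type} (G : SimpleGraph V) (s₁ t₁ s₂ t₂ : V) : Prop :=
  ∃ H 𝒯, StructureIWith G s₁ t₁ s₂ t₂ H 𝒯

/-- Structure (i) with, in addition, `s₁, s₂, t₂, t₁` occurring on the outer facial
cycle in this (clockwise) cyclic order. -/
def StructureIOrdered {V : Type} (G : SimpleGraph V) (s₁ t₁ s₂ t₂ : V) : Prop :=
  ∃ (H : SimpleGraph V) (𝒯 : Set (Set V)) (w : V) (C : H.Walk w w),
    C.IsCycle ∧ s(s₁, t₁) ∈ C.edges ∧ s(s₂, t₂) ∈ C.edges ∧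
    InCyclicOrder C.support.tail [s₁, s₂, t₂, t₁] ∧
    IsKConnected 2 (H.induce H.support) ∧
    IsPlanar (facesAugmented H (fun X : Option {T // T ∈ 𝒯} =>
      X.elim {v | v ∈ C.support} Subtype.val)) ∧
    ArisesBy3Sums G H 𝒯

def fiveEdges {V : Type} (s₁ t₁ u₁ v₁ : V) : Set (Sym2 V) :=
  {s(s₁, t₁), s(s₁, u₁), s(s₁, v₁), s(t₁, u₁), s(t₁, v₁)}

/-- Structure (ii), with the member `base` of `𝒢₂` and the triangle collection `𝒯`
exhibited: `base` is obtained from a `2`-connected plane graph `H` with distinct vertices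
`u₁, v₁, s₂, t₂` (together with the edge `s₂t₂`) on its outer facial cycle `C` by adding the
two new vertices `s₁, t₁` and the five edges `s₁t₁, s₁u₁, s₁v₁, t₁u₁, t₁v₁`, the collection
`𝒯` consists of the triangles `s₁t₁u₁`, `s₁t₁v₁` and facial triangles of `H`, and `G` arises
from `base` by `3`-summing `3`-connected graphs to the triangles in `𝒯`. -/
def StructureIIWith {V : Type} (G : SimpleGraph V) (s₁ t₁ s₂ t₂ : V)
    (base : SimpleGraph V) (𝒯 : Set (Set V)) : Prop :=
  ∃ (H : SimpleGraph V) (u₁ v₁ : V) (𝒯H : Set (Set V)) (w : V) (C : H.Walk w w),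
    C.IsCycle ∧
    u₁ ∈ C.support ∧ v₁ ∈ C.support ∧ s₂ ∈ C.support ∧ t₂ ∈ C.support ∧
    ([u₁, v₁, s₂, t₂] : List V).Nodup ∧ s(s₂, t₂) ∈ C.edges ∧
    s₁ ∉ H.support ∧ t₁ ∉ H.support ∧ s₁ ≠ t₁ ∧
    IsKConnected 2 (H.induce H.support) ∧
    (∀ T ∈ 𝒯H, IsTriangle H T) ∧
    IsPlanar (facesAugmented H (fun X : Option {T // T ∈ 𝒯H} =>
      X.elim {v | v ∈ C.support} Subtype.val)) ∧
    base = H ⊔ SimpleGraph.fromEdgeSet (fiveEdges s₁ t₁ u₁ v₁) ∧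
    𝒯 = {({s₁, t₁, u₁} : Set V), ({s₁, t₁, v₁} : Set V)} ∪ 𝒯H ∧
    ArisesBy3Sums G base 𝒯

def StructureII {V : Type} (G : SimpleGraph V) (s₁ t₁ s₂ t₂ : V) : Prop :=
  ∃ base 𝒯, StructureIIWith G s₁ t₁ s₂ t₂ base 𝒯

def tenEdges {V : Type} (s₁ t₁ s₂ t₂ u₁ v₁ u₂ v₂ : V) : Set (Sym2 V) :=
  {s(s₁, t₁), s(s₁, u₁), s(s₁, v₁), s(t₁, u₁), s(t₁, v₁),
   s(s₂, t₂), s(s₂, u₂), s(s₂, v₂), s(t₂, u₂), s(t₂, v₂)}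

/-- Structure (iii), with the member `base` of `𝒢₃` and the triangle collection `𝒯`
exhibited: `base` is obtained from `H = K₂` on `u₁,v₁` (with `u₂ = u₁`, `v₂ = v₁`) or from a
`2`-connected plane graph `H` with `v₁, u₁, u₂, v₂` on its outer facial cycle in clockwise
order, by adding the four new vertices `s₁, t₁, s₂, t₂` and ten edges, where `uᵢ ≠ vᵢ` and
`|{u₁,v₁,u₂,v₂}| ≥ 3`, the collection `𝒯` consists of the triangles `s₁t₁u₁`, `s₁t₁v₁`,
`s₂t₂u₂`, `s₂t₂v₂` and facial triangles of `H`, and `G` arises from `base` by `3`-summing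
`3`-connected graphs to the triangles in `𝒯`. -/
def StructureIIIWith {V : Type} (G : SimpleGraph V) (s₁ t₁ s₂ t₂ : V)
    (base : SimpleGraph V) (𝒯 : Set (Set V)) : Prop :=
  ∃ (H : SimpleGraph V) (u₁ v₁ u₂ v₂ : V) (𝒯H : Set (Set V)),
    u₁ ≠ v₁ ∧ u₂ ≠ v₂ ∧ 3 ≤ ({u₁, v₁, u₂, v₂} : Set V).ncard ∧
    ([s₁, t₁, s₂, t₂] : List V).Nodup ∧
    s₁ ∉ H.support ∧ t₁ ∉ H.support ∧ s₂ ∉ H.support ∧ t₂ ∉ H.support ∧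
    u₁ ∈ H.support ∧ v₁ ∈ H.support ∧ u₂ ∈ H.support ∧ v₂ ∈ H.support ∧
    ((H = SimpleGraph.fromEdgeSet {s(u₁, v₁)} ∧ u₂ = u₁ ∧ v₂ = v₁ ∧ 𝒯H = ∅) ∨
     (∃ (w : V) (C : H.Walk w w), C.IsCycle ∧
        IsKConnected 2 (H.induce H.support) ∧
        (∀ T ∈ 𝒯H, IsTriangle H T) ∧
        InCyclicOrder C.support.tail (@List.dedup V (Classical.decEq V) [v₁, u₁, u₂, v₂]) ∧
        (∀ x, x ∈ C.support → x ∈ H.support) ∧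
        v₁ ∈ C.support ∧ u₁ ∈ C.support ∧ u₂ ∈ C.support ∧ v₂ ∈ C.support ∧
        IsPlanar (facesAugmented H (fun X : Option {T // T ∈ 𝒯H} =>
          X.elim {v | v ∈ C.support} Subtype.val)))) ∧
    base = H ⊔ SimpleGraph.fromEdgeSet (tenEdges s₁ t₁ s₂ t₂ u₁ v₁ u₂ v₂) ∧
    𝒯 = ({({s₁, t₁, u₁} : Set V), ({s₁, t₁, v₁} : Set V),
          ({s₂, t₂, u₂} : Set V), ({s₂, t₂, v₂} : Set V)} : Set (Set V)) ∪ 𝒯H ∧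
    ArisesBy3Sums G base 𝒯

def StructureIII {V : Type} (G : SimpleGraph V) (s₁ t₁ s₂ t₂ : V) : Prop :=
  ∃ base 𝒯, StructureIIIWith G s₁ t₁ s₂ t₂ base 𝒯

/-- Structure (iv): every `M`-bridge of `G` is trivial, or has exactly three feet, or has a
`1`-separation `(B₁,B₂)` whose cut vertex `x` is outside `V(M)` with `{sᵢ,tᵢ} ⊆ V(Bᵢ)`. -/
def StructureIV {V : Type} (G : SimpleGraph V) (s₁ t₁ s₂ t₂ : V) (M : G.Subgraph) : Prop :=
  ∀ B : G.Subgraph, IsBridgeOf M B →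
    IsTrivialBridgeOf M B ∨ (bridgeFeet M B).ncard = 3 ∨
    ∃ (B₁ B₂ : G.Subgraph) (x : V),
      IsSubgraphSeparation B B₁ B₂ 1 ∧ B₁.verts ∩ B₂.verts = {x} ∧
      x ∉ M.verts ∧ s₁ ∈ B₁.verts ∧ t₁ ∈ B₁.verts ∧ s₂ ∈ B₂.verts ∧ t₂ ∈ B₂.verts
-- ============ The structure theorem and minimum counterexamples ============

/-- `G` (with the specified nonadjacent edges `e₁ = s₁t₁` and `e₂ = s₂t₂`) satisfies one of
the four conclusions (i)-(iv) of the structure theorem. -/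
def SatisfiesStructure {V : Type} (G : SimpleGraph V) (s₁ t₁ s₂ t₂ : V)
    (h₁ : G.Adj s₁ t₁) (h₂ : G.Adj s₂ t₂) : Prop :=
  StructureI G s₁ t₁ s₂ t₂ ∨ StructureII G s₁ t₁ s₂ t₂ ∨ StructureII G s₂ t₂ s₁ t₁ ∨
  StructureIII G s₁ t₁ s₂ t₂ ∨
  StructureIV G s₁ t₁ s₂ t₂ (Msub G h₁ h₂)

/-- A counterexample to the structure theorem: a graph with two specified nonadjacent
edges `e₁ = s₁t₁`, `e₂ = s₂t₂`, which is `2`-connected, all of whose `2`-separations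
separate `e₁` from `e₂`, which is `K₄*`-free, and which satisfies none of the conclusions
(i)-(iv). -/
def IsCounterexample {V : Type} (G : SimpleGraph V) (s₁ t₁ s₂ t₂ : V) : Prop :=
  ∃ (h₁ : G.Adj s₁ t₁) (h₂ : G.Adj s₂ t₂),
    ([s₁, t₁, s₂, t₂] : List V).Nodup ∧
    IsKConnected 2 G ∧
    (∀ G₁ G₂ : G.Subgraph, IsKSeparation G G₁ G₂ 2 →
      SeparatesEdgePair G₁ G₂ s(s₁, t₁) s(s₂, t₂)) ∧
    ¬ HasK4starMinor G s₁ t₁ s₂ t₂ ∧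
    ¬ SatisfiesStructure G s₁ t₁ s₂ t₂ h₁ h₂

/-- A minimum counterexample: a counterexample with the minimum number of edges among
all (finite) counterexamples. -/
def IsMinCounterexample {V : Type} (G : SimpleGraph V) (s₁ t₁ s₂ t₂ : V) : Prop :=
  IsCounterexample G s₁ t₁ s₂ t₂ ∧
  ∀ (W : Type) (_ : Finite W) (G' : SimpleGraph W) (a₁ b₁ a₂ b₂ : W),
    IsCounterexample G' a₁ b₁ a₂ b₂ → G.edgeSet.ncard ≤ G'.edgeSet.ncard

-- ============ Cuts and bicuts ============

/-- `K` is an `(S,T)`-cut: a set of edges of `G` meeting every path from `S` to `T`. -/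
def IsSTCut {V : Type} (G : SimpleGraph V) (S T : Set V) (K : Set (Sym2 V)) : Prop :=
  K ⊆ G.edgeSet ∧
  ∀ (u v : V), u ∈ S → v ∈ T → ∀ p : G.Walk u v, p.IsPath → ∃ e ∈ p.edges, e ∈ K

/-- The capacity of a set of edges. -/
noncomputable def cutCap {V : Type} (c : Sym2 V → ℕ) (K : Set (Sym2 V)) : ℕ :=
  ∑ᶠ e ∈ K, c e

/-- `K` is an `(s₁,t₁;s₂,t₂)`-bicut: a set of edges of `G` meeting every `s₁`-`t₁` path
and every `s₂`-`t₂` path. -/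
def IsBicut {V : Type} (G : SimpleGraph V) (s₁ t₁ s₂ t₂ : V) (K : Set (Sym2 V)) : Prop :=
  K ⊆ G.edgeSet ∧
  (∀ p : G.Walk s₁ t₁, p.IsPath → ∃ e ∈ p.edges, e ∈ K) ∧
  (∀ p : G.Walk s₂ t₂, p.IsPath → ∃ e ∈ p.edges, e ∈ K)

-- ============ Flows in the arc-vertex form ============

/-- The divergence (net outflow) of `f` at `v`. -/
noncomputable def divg {V : Type} [Fintype V] (f : V → V → ℝ) (v : V) : ℝ :=
  (∑ w, f v w) - (∑ w, f w v)

/-- An `(S,T)`-flow in the network `(G,c)`, in the arc-vertex form, on the digraph `D`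
obtained from `G` by replacing each edge by a pair of opposite arcs. -/
def IsArcFlow {V : Type} [Fintype V] (G : SimpleGraph V) (c : Sym2 V → ℕ)
    (S T : Set V) (f : V → V → ℝ) : Prop :=
  (∀ u v, 0 ≤ f u v) ∧
  (∀ u v, ¬ G.Adj u v → f u v = 0) ∧
  (∀ u v, G.Adj u v → f u v + f v u ≤ (c s(u, v) : ℝ)) ∧
  (∀ v, v ∉ S → v ∉ T → divg f v = 0) ∧
  (∀ v ∈ S, 0 ≤ divg f v) ∧
  (∀ v ∈ T, divg f v ≤ 0)

/-- The value of an `(S,T)`-flow. -/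
noncomputable def flowVal {V : Type} [Fintype V] (S : Set V) (f : V → V → ℝ) : ℝ :=
  ∑ᶠ v ∈ S, divg f v

def IsIntegralArc {V : Type} (f : V → V → ℝ) : Prop := ∀ u v, ∃ n : ℤ, f u v = n

/-- An `(s₁,t₁;s₂,t₂)`-biflow in the arc-vertex form: an `s₁`-`t₁` flow and an `s₂`-`t₂`
flow jointly respecting the capacities. -/
def IsArcBiflow {V : Type} [Fintype V] (G : SimpleGraph V) (c : Sym2 V → ℕ)
    (s₁ t₁ s₂ t₂ : V) (f₁ f₂ : V → V → ℝ) : Prop :=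
  IsArcFlow G c {s₁} {t₁} f₁ ∧ IsArcFlow G c {s₂} {t₂} f₂ ∧
  ∀ u v, G.Adj u v → f₁ u v + f₁ v u + f₂ u v + f₂ v u ≤ (c s(u, v) : ℝ)

-- ============ Biflows in the path-packing form ============

/-- The set `𝒫` of simple paths from `s₁` to `t₁` or from `s₂` to `t₂`. -/
def BPath {V : Type} (G : SimpleGraph V) (s₁ t₁ s₂ t₂ : V) : Type :=
  {p : G.Walk s₁ t₁ // p.IsPath} ⊕ {p : G.Walk s₂ t₂ // p.IsPath}

def bpEdges {V : Type} {G : SimpleGraph V} {s₁ t₁ s₂ t₂ : V}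
    (Q : BPath G s₁ t₁ s₂ t₂) : List (Sym2 V) :=
  Q.elim (fun p => p.1.edges) (fun p => p.1.edges)

/-- A biflow: a nonnegative assignment on `𝒫` respecting the capacity of each edge. -/
def IsBiflow {V : Type} (G : SimpleGraph V) (c : Sym2 V → ℕ) (s₁ t₁ s₂ t₂ : V)
    (f : BPath G s₁ t₁ s₂ t₂ → ℝ) : Prop :=
  (∀ Q, 0 ≤ f Q) ∧
  ∀ e ∈ G.edgeSet, (∑ᶠ Q ∈ {Q | e ∈ bpEdges Q}, f Q) ≤ (c e : ℝ)

/-- The value of a biflow. -/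
noncomputable def biflowVal {V : Type} {G : SimpleGraph V} {s₁ t₁ s₂ t₂ : V}
    (f : BPath G s₁ t₁ s₂ t₂ → ℝ) : ℝ :=
  ∑ᶠ Q, f Q

def IsIntegralBiflow {V : Type} {G : SimpleGraph V} {s₁ t₁ s₂ t₂ : V}
    (f : BPath G s₁ t₁ s₂ t₂ → ℝ) : Prop :=
  ∀ Q, ∃ n : ℤ, f Q = n

/-- The maximum value of an integral biflow equals the minimum capacity of a bicut. -/
def MaxBiflowEqMinBicut {V : Type} (G : SimpleGraph V) (c : Sym2 V → ℕ)
    (s₁ t₁ s₂ t₂ : V) : Prop :=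
  ∃ r : ℝ,
    IsGreatest {x | ∃ f : BPath G s₁ t₁ s₂ t₂ → ℝ,
      IsBiflow G c s₁ t₁ s₂ t₂ f ∧ IsIntegralBiflow f ∧ biflowVal f = x} r ∧
    IsLeast {x | ∃ K : Set (Sym2 V),
      IsBicut G s₁ t₁ s₂ t₂ K ∧ (cutCap c K : ℝ) = x} r

-- ============ Circlets ============

/-- The cyclic successor on `Fin n`. -/
def cnext {n : ℕ} (hn : 0 < n) (i : Fin n) : Fin n := ⟨((i : ℕ) + 1) % n, Nat.mod_lt _ hn⟩

/-- A circlet of `G`: a cyclically ordered set of at least four distinct vertices together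
with a set of edges of `G` of the form `vᵢvᵢ₊₁`. -/
structure Circlet {V : Type} (G : SimpleGraph V) where
  n : ℕ
  hn : 4 ≤ n
  vtx : Fin n → V
  inj : Function.Injective vtx
  edges : Set (Sym2 V)
  edges_sub : edges ⊆ G.edgeSet
  edges_form : ∀ e ∈ edges, ∃ i : Fin n, e = s(vtx i, vtx (cnext (by omega) i))

/-- `C` is an `Ω`-cycle: a cycle containing `V(Ω)` and `E(Ω)`, with the cyclic ordering of
`V(Ω)` agreeing with its ordering on `C`. -/
def IsOmegaCycle {V : Type} {G : SimpleGraph V} (Ω : Circlet G) {w : V}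
    (C : G.Walk w w) : Prop :=
  C.IsCycle ∧ (∀ i, Ω.vtx i ∈ C.support) ∧ (∀ e ∈ Ω.edges, e ∈ C.edges) ∧
  InCyclicOrder C.support.tail (List.ofFn Ω.vtx)

/-- A `C`-path: a path meeting the cycle `C` exactly in its two distinct ends and using no
edge of `C`. -/
def IsCPath {V : Type} {G : SimpleGraph V} {w : V} (C : G.Walk w w) {a b : V}
    (P : G.Walk a b) : Prop :=
  P.IsPath ∧ a ≠ b ∧ a ∈ C.support ∧ b ∈ C.support ∧
  (∀ e ∈ P.edges, e ∉ C.edges) ∧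
  ∀ v ∈ P.support, v ∈ C.support → v = a ∨ v = b

/-- `(P₁,P₂)` is a cross of `C`: vertex-disjoint `C`-paths whose ends interleave on `C`. -/
def IsCross {V : Type} {G : SimpleGraph V} {w : V} (C : G.Walk w w) {a₁ b₁ a₂ b₂ : V}
    (P₁ : G.Walk a₁ b₁) (P₂ : G.Walk a₂ b₂) : Prop :=
  IsCPath C P₁ ∧ IsCPath C P₂ ∧ (∀ v ∈ P₁.support, v ∉ P₂.support) ∧
  InCyclicOrder C.support.tail [a₁, a₂, b₁, b₂]

/-- `A` is the vertex set of the segment of `C` from `a` to `b` avoiding `avoid`. -/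
def IsSegment {V : Type} {G : SimpleGraph V} {w : V} (C : G.Walk w w)
    (a b avoid : V) (A : Set V) : Prop :=
  ∃ p : G.Walk a b, p.IsPath ∧ (∀ e ∈ p.edges, e ∈ C.edges) ∧ avoid ∉ p.support ∧
    A = {v | v ∈ p.support}


open Finset
open scoped Classical

noncomputable section

namespace Triflow

variable {V : Type} [Fintype V] (G : SimpleGraph V) (c : Sym2 V → ℕ)

def Feas (f : V → V → ℕ) : Prop :=
  (∀ u v, ¬ G.Adj u v → f u v = 0) ∧ (∀ u v, G.Adj u v → f u v + f v u ≤ c s(u, v))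

def ndivg (f : V → V → ℕ) (v : V) : ℤ :=
  (∑ w, (f v w : ℤ)) - ∑ w, (f w v : ℤ)

def rres (f : V → V → ℕ) (u v : V) : Prop := G.Adj u v ∧ f u v < c s(u, v)

lemma ndivg_add (f g : V → V → ℕ) (v : V) :
    ndivg (fun u w => f u w + g u w) v = ndivg f v + ndivg g v := by
  simp only [ndivg, Nat.cast_add, Finset.sum_add_distrib]
  ring

lemma ndivg_zero (v : V) : ndivg (fun _ _ => 0) v = 0 := by simp [ndivg]

lemma sum_ndivg (f : V → V → ℕ) (R : Finset V) :
    ∑ v ∈ R, ndivg f v = ∑ u ∈ R, ∑ w ∈ Rᶜ, ((f u w : ℤ) - f w u) := by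
  have h1 : ∑ v ∈ R, ndivg f v =
      (∑ v ∈ R, ∑ w ∈ R, ((f v w : ℤ) - f w v))
        + ∑ v ∈ R, ∑ w ∈ Rᶜ, ((f v w : ℤ) - f w v) := by
    rw [← Finset.sum_add_distrib]
    refine Finset.sum_congr rfl fun v _ => ?_
    rw [Finset.sum_add_sum_compl R (fun w => ((f v w : ℤ) - f w v))]
    simp [ndivg, Finset.sum_sub_distrib]
  have h2 : ∑ v ∈ R, ∑ w ∈ R, ((f v w : ℤ) - f w v) = 0 := by
    have hs : ∑ v ∈ R, ∑ w ∈ R, (f v w : ℤ) = ∑ v ∈ R, ∑ w ∈ R, (f w v : ℤ) :=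
      Finset.sum_comm
    simp only [Finset.sum_sub_distrib]
    omega
  rw [h1, h2, zero_add]

lemma ndivg_modify (f : V → V → ℕ) (a b : V) (m : ℕ) (v : V) :
    ndivg (fun p q => if p = a ∧ q = b then m else f p q) v =
      ndivg f v + (if v = a then (m : ℤ) - f a b else 0)
        - (if v = b then (m : ℤ) - f a b else 0) := by
  have hterm : ∀ p q : V, ((if p = a ∧ q = b then m else f p q : ℕ) : ℤ)
      = (f p q : ℤ) + (if p = a ∧ q = b then (m : ℤ) - f a b else 0) := by
    intro p q
    by_cases h : p = a ∧ q = b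
    · obtain ⟨rfl, rfl⟩ := h; simp
    · simp [h]
  have row : (∑ q, ((if v = a ∧ q = b then m else f v q : ℕ) : ℤ))
      = (∑ q, (f v q : ℤ)) + (if v = a then (m : ℤ) - f a b else 0) := by
    simp only [hterm, Finset.sum_add_distrib]
    congr 1
    by_cases hv : v = a
    · simp [hv]
    · simp [hv]
  have col : (∑ p, ((if p = a ∧ v = b then m else f p v : ℕ) : ℤ))
      = (∑ p, (f p v : ℤ)) + (if v = b then (m : ℤ) - f a b else 0) := by
    simp only [hterm, Finset.sum_add_distrib]
    congr 1
    by_cases hv : v = b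
    · simp [hv]
    · simp [hv]
  simp only [ndivg, row, col]
  ring

lemma stepAug {f : V → V → ℕ} (hf : Feas G c f) {u v : V} (h : rres G c f u v) :
    ∃ f' : V → V → ℕ, Feas G c f' ∧
      (∀ p q, ¬(p = u ∧ q = v) → ¬(p = v ∧ q = u) → f' p q = f p q) ∧
      ∀ w, ndivg f' w = ndivg f w + (if w = u then 1 else 0)
        - (if w = v then 1 else 0) := by
  have huv : u ≠ v := h.1.ne
  by_cases h0 : 0 < f v u
  · refine ⟨fun p q => if p = v ∧ q = u then f v u - 1 else f p q, ⟨?_, ?_⟩, ?_, ?_⟩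
    · intro p q hadj
      by_cases hpq : p = v ∧ q = u
      · obtain ⟨rfl, rfl⟩ := hpq; exact absurd h.1.symm hadj
      · simp only [if_neg hpq]; exact hf.1 p q hadj
    · intro p q hadj
      have hle : ∀ p q : V, (if p = v ∧ q = u then f v u - 1 else f p q) ≤ f p q := by
        intro p q
        by_cases hpq : p = v ∧ q = u
        · obtain ⟨rfl, rfl⟩ := hpq; simp
        · simp [hpq]
      calc _ ≤ f p q + f q p := Nat.add_le_add (hle p q) (hle q p)
        _ ≤ c s(p, q) := hf.2 p q hadj
    · intro p q h1 h2
      simp [h2]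
    · intro w
      have := ndivg_modify f v u (f v u - 1) w
      rw [this]
      have hm : ((f v u - 1 : ℕ) : ℤ) - (f v u : ℤ) = -1 := by
        rw [Nat.cast_sub (by omega)]; ring
      rw [hm]
      by_cases hwu : w = u <;> by_cases hwv : w = v <;> simp_all <;> ring
  · have hvu : f v u = 0 := by omega
    refine ⟨fun p q => if p = u ∧ q = v then f u v + 1 else f p q, ⟨?_, ?_⟩, ?_, ?_⟩
    · intro p q hadj
      by_cases hpq : p = u ∧ q = v
      · obtain ⟨rfl, rfl⟩ := hpq; exact absurd h.1 hadj
      · simp only [if_neg hpq]; exact hf.1 p q hadj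
    · intro p q hadj
      by_cases hpq : p = u ∧ q = v
      · have hp : p = u := hpq.1
        have hq : q = v := hpq.2
        have hne : ¬ (q = u ∧ p = v) := fun hh => huv (hp.symm.trans hh.2)
        simp only [if_pos hpq, if_neg hne]
        rw [hp, hq, hvu]
        have := h.2
        omega
      · by_cases hqp : q = u ∧ p = v
        · have hp : p = v := hqp.2
          have hq : q = u := hqp.1
          have hne : ¬ (p = u ∧ q = v) := fun hh => huv ((hp ▸ hh.1 : v = u)).symm
          simp only [if_neg hne, if_pos hqp]
          rw [hp, hq, hvu, show s(v, u) = s(u, v) from Sym2.eq_swap]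
          have := h.2
          omega
        · simp only [if_neg hpq, if_neg hqp]
          exact hf.2 p q hadj
    · intro p q h1 h2
      simp [h1]
    · intro w
      have := ndivg_modify f u v (f u v + 1) w
      rw [this]
      have hm : ((f u v + 1 : ℕ) : ℤ) - (f u v : ℤ) = 1 := by push_cast; ring
      rw [hm]

lemma chain_congr {r r' : V → V → Prop} :
    ∀ (l : List V) (x : V), (∀ p q, p ∈ x :: l → q ∈ x :: l → (r p q ↔ r' p q)) →
      List.Chain r x l → List.Chain r' x l := by
  intro l
  induction l with
  | nil => intro x _ _; exact List.Chain.nil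
  | cons u rest ih =>
    intro x hpq hc
    rw [List.Chain, List.chain_cons] at hc ⊢
    refine ⟨(hpq x u (by simp) (by simp)).1 hc.1, ih u ?_ hc.2⟩
    intro p q hp hq
    exact hpq p q (by simp at hp ⊢; tauto) (by simp at hq ⊢; tauto)

lemma chainAug : ∀ (l : List V) (a : V) (f : V → V → ℕ), Feas G c f →
    List.Chain (rres G c f) a l → (a :: l).Nodup →
    ∃ f', Feas G c f' ∧ ∀ w, ndivg f' w = ndivg f w + (if w = a then 1 else 0)
      - (if w = (a :: l).getLast (List.cons_ne_nil a l) then 1 else 0) := by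
  intro l
  induction l with
  | nil => intro a f hf _ _; exact ⟨f, hf, by intro w; split_ifs <;> simp_all⟩
  | cons u rest ih =>
    intro a f hf hc hnd
    rw [List.Chain, List.chain_cons] at hc
    obtain ⟨f₁, hf₁, heq, hdiv₁⟩ := stepAug G c hf hc.1
    have hanotin : a ∉ u :: rest := (List.nodup_cons.mp hnd).1
    have hchain₁ : List.Chain (rres G c f₁) u rest := by
      refine chain_congr _ _ ?_ hc.2
      intro p q hp hq
      have hpa : p ≠ a := fun hh => hanotin (hh ▸ hp)
      have hqa : q ≠ a := fun hh => hanotin (hh ▸ hq)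
      unfold rres
      rw [heq p q (fun hh => hpa hh.1) (fun hh => hqa hh.2)]
    obtain ⟨f', hf', hdiv⟩ := ih u f₁ hf₁ hchain₁ (List.nodup_cons.mp hnd).2
    refine ⟨f', hf', ?_⟩
    intro w
    rw [List.getLast_cons_cons]
    have h1 := hdiv w
    have h2 := hdiv₁ w
    rw [h1, h2]
    have hau : a ≠ u := fun hh => hanotin (hh ▸ List.mem_cons_self (a := u) (l := rest))
    by_cases hwa : w = a <;> by_cases hwu : w = u <;> simp_all <;> ring

lemma not_nodup_decomp {α : Type} : ∀ (L : List α), ¬ L.Nodup →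
    ∃ (x : α) (l₁ l₂ l₃ : List α), L = l₁ ++ x :: (l₂ ++ x :: l₃) := by
  intro L
  induction L with
  | nil => simp
  | cons a l ih =>
    intro h
    rw [List.nodup_cons] at h
    push_neg at h
    by_cases ha : a ∈ l
    · obtain ⟨l₂, l₃, rfl⟩ := List.append_of_mem ha
      exact ⟨a, [], l₂, l₃, by simp⟩
    · obtain ⟨x, l₁, l₂, l₃, rfl⟩ := ih (h ha)
      exact ⟨x, a :: l₁, l₂, l₃, by simp⟩

lemma getLast_cons_append {α : Type} (a : α) (l₁ : List α) (x : α) (l₃ : List α) :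
    (a :: (l₁ ++ x :: l₃)).getLast (List.cons_ne_nil _ _)
      = (x :: l₃).getLast (List.cons_ne_nil _ _) := by
  rw [List.getLast_eq_iff_getLast?_eq_some,
    show a :: (l₁ ++ x :: l₃) = (a :: l₁) ++ (x :: l₃) by simp, List.getLast?_append,
    List.getLast?_eq_getLast (l := x :: l₃) (List.cons_ne_nil _ _)]
  simp

lemma exists_nodup_chain {α : Type} {r : α → α → Prop} {a b : α}
    (h : Relation.ReflTransGen r a b) :
    ∃ l, List.Chain r a l ∧ (a :: l).getLast (List.cons_ne_nil _ _) = b ∧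
      (a :: l).Nodup := by
  obtain ⟨l0, hl0, hlast0⟩ := List.exists_isChain_cons_of_relationReflTransGen h
  clear h
  suffices H : ∀ (n : ℕ) (l : List α), l.length ≤ n → List.Chain r a l →
      (a :: l).getLast (List.cons_ne_nil _ _) = b →
      ∃ l', List.Chain r a l' ∧ (a :: l').getLast (List.cons_ne_nil _ _) = b ∧
        (a :: l').Nodup from H l0.length l0 le_rfl hl0 hlast0
  intro n
  induction n with
  | zero =>
    intro l hlen hc hlast
    rw [List.length_eq_zero_iff.mp (Nat.le_zero.mp hlen)] at hc hlast
    exact ⟨[], List.Chain.nil, hlast, List.nodup_singleton a⟩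
  | succ n ih =>
    intro l hlen hc hlast
    by_cases hnd : (a :: l).Nodup
    · exact ⟨l, hc, hlast, hnd⟩
    · obtain ⟨x, l₁, l₂, l₃, hL⟩ := not_nodup_decomp _ hnd
      cases l₁ with
      | nil =>
        simp only [List.nil_append, List.cons.injEq] at hL
        obtain ⟨rfl, rfl⟩ := hL
        have hc₃ : List.Chain r a l₃ := (List.isChain_cons_split.mp hc).2
        have hlen₃ : l₃.length ≤ n := by
          simp only [List.length_append, List.length_cons] at hlen; omega
        have hlast₃ : (a :: l₃).getLast (List.cons_ne_nil _ _) = b := by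
          rw [← hlast, getLast_cons_append]
        exact ih l₃ hlen₃ hc₃ hlast₃
      | cons a' l₁' =>
        simp only [List.cons_append, List.cons.injEq] at hL
        obtain ⟨rfl, rfl⟩ := hL
        have hsplit := List.isChain_cons_split.mp hc
        have hx3 : List.Chain r x l₃ := (List.isChain_cons_split.mp hsplit.2).2
        have hnew : List.Chain r a (l₁' ++ x :: l₃) := List.isChain_cons_split.mpr ⟨hsplit.1, hx3⟩
        have hlen' : (l₁' ++ x :: l₃).length ≤ n := by
          simp only [List.length_append, List.length_cons] at hlen ⊢; omega
        have hlast' : (a :: (l₁' ++ x :: l₃)).getLast (List.cons_ne_nil _ _) = b := by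
          rw [← hlast, getLast_cons_append a l₁' x l₃]
          rw [show l₁' ++ x :: (l₂ ++ x :: l₃) = (l₁' ++ x :: l₂) ++ x :: l₃ by simp]
          rw [getLast_cons_append a (l₁' ++ x :: l₂) x l₃]
        exact ih _ hlen' hnew hlast'

lemma augment_of_reach {f : V → V → ℕ} (hf : Feas G c f) {s t : V}
    (h : Relation.ReflTransGen (rres G c f) s t) :
    ∃ f', Feas G c f' ∧ ∀ w, ndivg f' w = ndivg f w + (if w = s then 1 else 0)
      - (if w = t then 1 else 0) := by
  obtain ⟨l, hc, hlast, hnd⟩ := exists_nodup_chain h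
  obtain ⟨f', hf', hdiv⟩ := chainAug G c l s f hf hc hnd
  exact ⟨f', hf', fun w => by rw [hdiv w, hlast]⟩

def RsetS (f : V → V → ℕ) (S : Set V) : Finset V :=
  Finset.univ.filter (fun v => ∃ s ∈ S, Relation.ReflTransGen (rres G c f) s v)

lemma cutCap_coe (K : Finset (Sym2 V)) :
    cutCap c (↑K : Set (Sym2 V)) = ∑ e ∈ K, c e := by
  simp only [cutCap, finsum_mem_coe_finset]

lemma cutCap_eq_sum (K : Set (Sym2 V)) :
    cutCap c K = ∑ e ∈ Finset.univ.filter (· ∈ K), c e := by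
  rw [← cutCap_coe]
  congr 1
  ext e; simp

lemma mem_RsetS {f : V → V → ℕ} {S : Set V} {v : V} :
    v ∈ RsetS G c f S ↔ ∃ s ∈ S, Relation.ReflTransGen (rres G c f) s v := by
  simp [RsetS]

lemma walk_crosses (R : Finset V) :
    ∀ {a b : V} (p : G.Walk a b), a ∈ R → b ∉ R →
      ∃ u w, u ∈ R ∧ w ∉ R ∧ s(u, w) ∈ p.edges := by
  intro a b p
  induction p with
  | nil => intro ha hb; exact absurd ha hb
  | @cons u x b hadj p ih =>
    intro ha hb
    by_cases hx : x ∈ R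
    · obtain ⟨u', w', h1, h2, h3⟩ := ih hx hb
      exact ⟨u', w', h1, h2, List.mem_cons_of_mem _ h3⟩
    · exact ⟨u, x, ha, hx, by simp [SimpleGraph.Walk.edges_cons]⟩

lemma cutsat {f : V → V → ℕ} (hf : Feas G c f) (S : Set V) :
    ∃ K : Finset (Sym2 V), (↑K : Set (Sym2 V)) ⊆ G.edgeSet ∧
      (∀ (a b : V) (p : G.Walk a b), a ∈ RsetS G c f S → b ∉ RsetS G c f S →
        ∃ e ∈ p.edges, e ∈ K) ∧
      (cutCap c (↑K : Set (Sym2 V)) : ℤ) = ∑ v ∈ RsetS G c f S, ndivg f v := by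
  set R := RsetS G c f S with hR
  have hclosed : ∀ u w, u ∈ R → rres G c f u w → w ∈ R := by
    intro u w hu hres
    rw [hR, mem_RsetS] at hu ⊢
    obtain ⟨s, hs, hrtg⟩ := hu
    exact ⟨s, hs, hrtg.tail hres⟩
  set CP : Finset (V × V) :=
    (Finset.univ ×ˢ Finset.univ).filter
      (fun pq => pq.1 ∈ R ∧ pq.2 ∉ R ∧ G.Adj pq.1 pq.2) with hCP
  set K : Finset (Sym2 V) := CP.image (fun pq => s(pq.1, pq.2)) with hK
  have hmemCP : ∀ pq : V × V, pq ∈ CP ↔ pq.1 ∈ R ∧ pq.2 ∉ R ∧ G.Adj pq.1 pq.2 := by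
    intro pq; simp [hCP]
  have hsat : ∀ pq ∈ CP, (f pq.1 pq.2 : ℤ) - f pq.2 pq.1
      = (c s(pq.1, pq.2) : ℤ) := by
    intro pq hpq
    rw [hmemCP] at hpq
    obtain ⟨h1, h2, h3⟩ := hpq
    have hnres : ¬ rres G c f pq.1 pq.2 := fun hres => h2 (hclosed _ _ h1 hres)
    rw [rres] at hnres
    push_neg at hnres
    have h4 := hnres h3
    have h5 := hf.2 pq.1 pq.2 h3
    omega
  have hinj : ∀ pq ∈ CP, ∀ pq' ∈ CP, s(pq.1, pq.2) = s(pq'.1, pq'.2) → pq = pq' := by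
    intro pq hpq pq' hpq' he
    rw [hmemCP] at hpq hpq'
    rw [Sym2.eq_iff] at he
    rcases he with ⟨h1, h2⟩ | ⟨h1, h2⟩
    · exact Prod.ext h1 h2
    · exfalso
      have hmem : pq'.2 ∈ R := h1 ▸ hpq.1
      exact hpq'.2.1 hmem
  refine ⟨K, ?_, ?_, ?_⟩
  · intro e he
    simp only [hK, Finset.coe_image, Set.mem_image, Finset.mem_coe] at he
    obtain ⟨pq, hpq, rfl⟩ := he
    exact ((hmemCP pq).mp hpq).2.2
  · intro a b p ha hb
    obtain ⟨u, w, h1, h2, h3⟩ := walk_crosses G R p ha hb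
    have hadj : G.Adj u w := p.adj_of_mem_edges h3
    refine ⟨s(u, w), h3, ?_⟩
    rw [hK, Finset.mem_image]
    exact ⟨(u, w), (hmemCP (u, w)).mpr ⟨h1, h2, hadj⟩, rfl⟩
  · rw [cutCap_coe, hK, Finset.sum_image hinj]
    rw [sum_ndivg, ← Finset.sum_product', Nat.cast_sum]
    rw [show ∑ pq ∈ CP, ((c s(pq.1, pq.2) : ℕ) : ℤ)
        = ∑ pq ∈ CP, ((f pq.1 pq.2 : ℤ) - f pq.2 pq.1) from
      Finset.sum_congr rfl (fun pq hpq => (hsat pq hpq).symm)]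
    refine Finset.sum_subset ?_ ?_
    · intro pq hpq
      rw [hmemCP] at hpq
      rw [Finset.mem_product]
      exact ⟨hpq.1, Finset.mem_compl.mpr hpq.2.1⟩
    · intro pq hpq hnpq
      rw [Finset.mem_product, Finset.mem_compl] at hpq
      rw [hmemCP] at hnpq
      push_neg at hnpq
      have hnadj : ¬ G.Adj pq.1 pq.2 := hnpq hpq.1 hpq.2
      rw [hf.1 pq.1 pq.2 hnadj, hf.1 pq.2 pq.1 (fun h => hnadj h.symm)]
      simp

lemma weakdual {f : V → V → ℕ} (hf : Feas G c f) (S T : Set V)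
    (h0 : ∀ v, v ∉ S → v ∉ T → ndivg f v = 0)
    {K : Set (Sym2 V)} (hK : IsSTCut G S T K) :
    ∑ v ∈ Finset.univ.filter (· ∈ S), ndivg f v ≤ (cutCap c K : ℤ) := by
  set R : Finset V := Finset.univ.filter
    (fun v => ∃ s ∈ S, ∃ p : G.Walk s v, ∀ e ∈ p.edges, e ∉ K) with hR
  have hmemR : ∀ v, v ∈ R ↔ ∃ s ∈ S, ∃ p : G.Walk s v, ∀ e ∈ p.edges, e ∉ K := by
    intro v; simp [hR]
  have hSR : Finset.univ.filter (· ∈ S) ⊆ R := by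
    intro v hv
    rw [Finset.mem_filter] at hv
    exact (hmemR v).mpr ⟨v, hv.2, SimpleGraph.Walk.nil, by simp⟩
  have hTR : ∀ t ∈ T, t ∉ R := by
    intro t ht hmem
    obtain ⟨s, hs, p, hp⟩ := (hmemR t).mp hmem
    obtain ⟨e, he, heK⟩ := hK.2 s t hs ht p.bypass p.bypass_isPath
    exact hp e (p.edges_bypass_subset he) heK
  have hclosed : ∀ u w, u ∈ R → G.Adj u w → s(u, w) ∉ K → w ∈ R := by
    intro u w hu hadj hne
    obtain ⟨s, hs, p, hp⟩ := (hmemR u).mp hu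
    refine (hmemR w).mpr ⟨s, hs, p.concat hadj, ?_⟩
    intro e he
    rw [SimpleGraph.Walk.edges_concat, List.concat_eq_append, List.mem_append,
      List.mem_singleton] at he
    rcases he with he | rfl
    · exact hp e he
    · exact hne
  have hstep1 : ∑ v ∈ Finset.univ.filter (· ∈ S), ndivg f v = ∑ v ∈ R, ndivg f v := by
    refine Finset.sum_subset hSR ?_
    intro v hvR hvS
    rw [Finset.mem_filter] at hvS
    push_neg at hvS
    exact h0 v (hvS (Finset.mem_univ v)) (fun hvT => hTR v hvT hvR)
  set CK : Finset (V × V) := (R ×ˢ Rᶜ).filter (fun pq => G.Adj pq.1 pq.2) with hCK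
  have hbound : ∀ pq ∈ R ×ˢ Rᶜ, ((f pq.1 pq.2 : ℤ) - f pq.2 pq.1)
      ≤ (if G.Adj pq.1 pq.2 then (c s(pq.1, pq.2) : ℤ) else 0) := by
    intro pq _
    by_cases hadj : G.Adj pq.1 pq.2
    · rw [if_pos hadj]
      have := hf.2 pq.1 pq.2 hadj
      omega
    · rw [if_neg hadj, hf.1 pq.1 pq.2 hadj, hf.1 pq.2 pq.1 (fun h => hadj h.symm)]
      simp
  have hinj : ∀ pq ∈ CK, ∀ pq' ∈ CK, s(pq.1, pq.2) = s(pq'.1, pq'.2) → pq = pq' := by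
    intro pq hpq pq' hpq' he
    rw [hCK, Finset.mem_filter, Finset.mem_product, Finset.mem_compl] at hpq hpq'
    rw [Sym2.eq_iff] at he
    rcases he with ⟨h1, h2⟩ | ⟨h1, h2⟩
    · exact Prod.ext h1 h2
    · exfalso
      have hmem : pq'.2 ∈ R := h1 ▸ hpq.1.1
      exact hpq'.1.2 hmem
  have himg : CK.image (fun pq => s(pq.1, pq.2)) ⊆ Finset.univ.filter (· ∈ K) := by
    intro e he
    rw [Finset.mem_image] at he
    obtain ⟨pq, hpq, rfl⟩ := he
    rw [hCK, Finset.mem_filter, Finset.mem_product, Finset.mem_compl] at hpq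
    simp only [Finset.mem_filter, Finset.mem_univ, true_and]
    by_contra hne
    exact hpq.1.2 (hclosed _ _ hpq.1.1 hpq.2 hne)
  calc ∑ v ∈ Finset.univ.filter (· ∈ S), ndivg f v
      = ∑ v ∈ R, ndivg f v := hstep1
    _ = ∑ pq ∈ R ×ˢ Rᶜ, ((f pq.1 pq.2 : ℤ) - f pq.2 pq.1) := by
        rw [sum_ndivg, ← Finset.sum_product']
    _ ≤ ∑ pq ∈ R ×ˢ Rᶜ, (if G.Adj pq.1 pq.2 then (c s(pq.1, pq.2) : ℤ) else 0) :=
        Finset.sum_le_sum hbound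
    _ = ∑ pq ∈ CK, (c s(pq.1, pq.2) : ℤ) := by
        rw [hCK, Finset.sum_filter]
    _ = ∑ e ∈ CK.image (fun pq => s(pq.1, pq.2)), (c e : ℤ) := by
        rw [Finset.sum_image hinj]
    _ ≤ ∑ e ∈ Finset.univ.filter (· ∈ K), (c e : ℤ) := by
        refine Finset.sum_le_sum_of_subset_of_nonneg himg ?_
        intro e _ _; positivity
    _ = (cutCap c K : ℤ) := by
        rw [cutCap_eq_sum, Nat.cast_sum]

lemma ndivg_le_bound {f : V → V → ℕ} (hf : Feas G c f) (s : V) :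
    ndivg f s ≤ ∑ w, (c s(s, w) : ℤ) := by
  have h1 : ∀ w, (f s w : ℤ) ≤ c s(s, w) := by
    intro w
    by_cases h : G.Adj s w
    · have := hf.2 s w h; omega
    · rw [hf.1 s w h]; exact_mod_cast Nat.zero_le _
  have h2 : (0 : ℤ) ≤ ∑ w, (f w s : ℤ) := by positivity
  have h3 : (∑ w, (f s w : ℤ)) ≤ ∑ w, (c s(s, w) : ℤ) :=
    Finset.sum_le_sum (fun w _ => h1 w)
  rw [ndivg]; omega

lemma maxaug (s t : V) (hst : s ≠ t) :
    ∀ (n : ℕ) (f : V → V → ℕ), Feas G c f →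
      ((∑ w, (c s(s, w) : ℤ)) - ndivg f s) ≤ n →
      ∃ (f' : V → V → ℕ) (m : ℕ), Feas G c f' ∧
        ¬ Relation.ReflTransGen (rres G c f') s t ∧
        (∀ v, v ≠ s → v ≠ t → ndivg f' v = ndivg f v) ∧
        ndivg f' s = ndivg f s + m ∧ ndivg f' t = ndivg f t - m := by
  intro n
  induction n with
  | zero =>
    intro f hf hle
    by_cases hr : Relation.ReflTransGen (rres G c f) s t
    · obtain ⟨f₁, hf₁, hdiv⟩ := augment_of_reach G c hf hr
      have h1 := hdiv s
      rw [if_pos rfl, if_neg hst] at h1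
      have h2 := ndivg_le_bound G c hf₁ s
      omega
    · exact ⟨f, 0, hf, hr, fun v _ _ => rfl, by simp, by simp⟩
  | succ n ih =>
    intro f hf hle
    by_cases hr : Relation.ReflTransGen (rres G c f) s t
    · obtain ⟨f₁, hf₁, hdiv⟩ := augment_of_reach G c hf hr
      have h1 := hdiv s
      rw [if_pos rfl, if_neg hst] at h1
      have hb : ((∑ w, (c s(s, w) : ℤ)) - ndivg f₁ s) ≤ n := by omega
      obtain ⟨f', m, hh1, hh2, hh3, hh4, hh5⟩ := ih f₁ hf₁ hb
      refine ⟨f', m + 1, hh1, hh2, ?_, ?_, ?_⟩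
      · intro v hvs hvt
        rw [hh3 v hvs hvt, hdiv v, if_neg hvs, if_neg hvt]
        ring
      · rw [hh4, h1]; push_cast; ring
      · have h2 := hdiv t
        rw [if_pos rfl, if_neg (Ne.symm hst)] at h2
        rw [hh5, h2]; push_cast; ring
    · exact ⟨f, 0, hf, hr, fun v _ _ => rfl, by simp, by simp⟩

lemma ndivg_single (a b : V) (v : V) :
    ndivg (fun p q => if p = a ∧ q = b then 1 else 0) v
      = (if v = a then 1 else 0) - (if v = b then 1 else 0) := by
  have h := ndivg_modify (fun _ _ => (0 : ℕ)) a b 1 v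
  simpa [ndivg_zero] using h

lemma chainSub : ∀ (l : List V) (a : V) (f : V → V → ℕ),
    List.Chain (fun p q => 0 < f p q) a l → (a :: l).Nodup →
    ∃ f' d : V → V → ℕ, (∀ p q, f' p q + d p q = f p q) ∧
      ∀ w, ndivg d w = (if w = a then 1 else 0)
        - (if w = (a :: l).getLast (List.cons_ne_nil a l) then 1 else 0) := by
  intro l
  induction l with
  | nil =>
    intro a f _ _
    exact ⟨f, fun _ _ => 0, fun p q => rfl, by intro w; split_ifs <;> simp_all [ndivg_zero]⟩
  | cons u rest ih =>
    intro a f hc hnd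
    rw [List.Chain, List.chain_cons] at hc
    set f₁ : V → V → ℕ := fun p q => if p = a ∧ q = u then f a u - 1 else f p q with hf₁
    have hanotin : a ∉ u :: rest := (List.nodup_cons.mp hnd).1
    have hchain₁ : List.Chain (fun p q => 0 < f₁ p q) u rest := by
      refine chain_congr _ _ ?_ hc.2
      intro p q hp _
      have hpa : p ≠ a := fun hh => hanotin (hh ▸ hp)
      rw [hf₁]
      simp only [if_neg (fun hh : p = a ∧ q = u => hpa hh.1)]
    obtain ⟨f', d', hfd, hdiv⟩ := ih u f₁ hchain₁ (List.nodup_cons.mp hnd).2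
    refine ⟨f', fun p q => d' p q + (if p = a ∧ q = u then 1 else 0), ?_, ?_⟩
    · intro p q
      have h1 := hfd p q
      show f' p q + (d' p q + (if p = a ∧ q = u then 1 else 0)) = f p q
      by_cases hpq : p = a ∧ q = u
      · rw [if_pos hpq]
        have h2 : f₁ p q = f p q - 1 := by
          rw [hf₁]; simp only [if_pos hpq]; rw [hpq.1, hpq.2]
        have h3 : 0 < f p q := by rw [hpq.1, hpq.2]; exact hc.1
        omega
      · rw [if_neg hpq]
        have h2 : f₁ p q = f p q := by rw [hf₁]; simp only [if_neg hpq]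
        omega
    · intro w
      have h1 := hdiv w
      have h2 := ndivg_add d' (fun p q => if p = a ∧ q = u then 1 else 0) w
      rw [h2, h1, ndivg_single, List.getLast_cons_cons]
      by_cases hwa : w = a <;> by_cases hwu : w = u <;> simp_all <;> ring

lemma ndivg_transpose (f : V → V → ℕ) (v : V) :
    ndivg (fun p q => f q p) v = - ndivg f v := by
  simp only [ndivg]
  ring

lemma decomp : ∀ (a b : ℕ) (f : V → V → ℕ) (x y z : V), x ≠ y → x ≠ z → y ≠ z →
    (∀ u v, ¬ G.Adj u v → f u v = 0) →
    (∀ v, v ≠ x → v ≠ y → v ≠ z → ndivg f v = 0) →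
    ndivg f x = (a : ℤ) + b → ndivg f y = -(a : ℤ) → ndivg f z = -(b : ℤ) →
    ∃ f1 f2 : V → V → ℕ, (∀ u v, f1 u v + f2 u v = f u v) ∧
      (∀ v, v ≠ x → v ≠ y → ndivg f1 v = 0) ∧ ndivg f1 x = a ∧ ndivg f1 y = -(a : ℤ) ∧
      (∀ v, v ≠ x → v ≠ z → ndivg f2 v = 0) ∧ ndivg f2 x = b ∧ ndivg f2 z = -(b : ℤ) := by
  intro a
  induction a with
  | zero =>
    intro b f x y z hxy hxz hyz hnadj h0 hx hy hz
    refine ⟨fun _ _ => 0, f, fun u v => by simp, ?_, by simp [ndivg_zero],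
      by simp [ndivg_zero], ?_, ?_, ?_⟩
    · intro v _ _; exact ndivg_zero v
    · intro v hvx hvz
      by_cases hvy : v = y
      · rw [hvy, hy]; simp
      · exact h0 v hvx hvy hvz
    · rw [hx]; simp
    · exact hz
  | succ a ih =>
    intro b f x y z hxy hxz hyz hnadj h0 hx hy hz
    have hreach : Relation.ReflTransGen (fun p q => 0 < f p q) x y := by
      by_contra hr
      set R := Finset.univ.filter
        (fun v => Relation.ReflTransGen (fun p q => 0 < f p q) x v) with hRdef
      have hyR : y ∉ R := by rw [hRdef]; simp only [Finset.mem_filter]; tauto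
      have hxR : x ∈ R := by
        rw [hRdef]; simp only [Finset.mem_filter, Finset.mem_univ, true_and]
        exact Relation.ReflTransGen.refl
      have hclosed : ∀ u w, u ∈ R → 0 < f u w → w ∈ R := by
        intro u w hu hf
        rw [hRdef, Finset.mem_filter] at hu ⊢
        exact ⟨Finset.mem_univ w, hu.2.tail hf⟩
      have hsum : ∑ v ∈ R, ndivg f v ≤ 0 := by
        rw [sum_ndivg]
        refine Finset.sum_nonpos ?_
        intro u hu
        refine Finset.sum_nonpos ?_
        intro w hw
        have hfw : f u w = 0 := by
          by_contra h
          exact (Finset.mem_compl.mp hw) (hclosed u w hu (Nat.pos_of_ne_zero h))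
        rw [hfw]
        simp
      have hsum2 : ∑ v ∈ R, ndivg f v = ndivg f x + ∑ v ∈ R.erase x, ndivg f v :=
        (Finset.add_sum_erase _ _ hxR).symm
      have herase : -(b : ℤ) ≤ ∑ v ∈ R.erase x, ndivg f v := by
        by_cases hzR : z ∈ R.erase x
        · rw [Finset.sum_eq_single_of_mem z hzR ?_]
          · rw [hz]
          · intro v hv hvz
            have hvx : v ≠ x := (Finset.mem_erase.mp hv).1
            have hvy : v ≠ y := fun hh => hyR (hh ▸ (Finset.mem_erase.mp hv).2)
            exact h0 v hvx hvy hvz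
        · rw [Finset.sum_eq_zero ?_]
          · have : (0 : ℤ) ≤ b := Int.ofNat_nonneg b
            omega
          · intro v hv
            have hvx : v ≠ x := (Finset.mem_erase.mp hv).1
            have hvy : v ≠ y := fun hh => hyR (hh ▸ (Finset.mem_erase.mp hv).2)
            have hvz : v ≠ z := fun hh => hzR (hh ▸ hv)
            exact h0 v hvx hvy hvz
      rw [hx] at hsum2
      push_cast at hsum2
      omega
    obtain ⟨l, hchain, hlast, hnd⟩ := exists_nodup_chain hreach
    obtain ⟨f', d, hfd, hddiv⟩ := chainSub l x f hchain hnd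
    have hd : ∀ w, ndivg d w = (if w = x then 1 else 0) - (if w = y then 1 else 0) := by
      intro w; rw [hddiv w, hlast]
    have hsplit : ∀ v, ndivg f v = ndivg f' v + ndivg d v := by
      intro v
      rw [← ndivg_add]
      congr 1
      funext p q
      exact (hfd p q).symm
    have hf'nadj : ∀ u v, ¬ G.Adj u v → f' u v = 0 := by
      intro u v h
      have h1 := hfd u v
      have h2 := hnadj u v h
      omega
    have hf'0 : ∀ v, v ≠ x → v ≠ y → v ≠ z → ndivg f' v = 0 := by
      intro v hvx hvy hvz
      have := hsplit v
      rw [h0 v hvx hvy hvz, hd v, if_neg hvx, if_neg hvy] at this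
      omega
    have hf'x : ndivg f' x = (a : ℤ) + b := by
      have := hsplit x
      rw [hx, hd x, if_pos rfl, if_neg hxy] at this
      push_cast at this ⊢
      omega
    have hf'y : ndivg f' y = -(a : ℤ) := by
      have := hsplit y
      rw [hy, hd y, if_neg (Ne.symm hxy), if_pos rfl] at this
      push_cast at this ⊢
      omega
    have hf'z : ndivg f' z = -(b : ℤ) := by
      have := hsplit z
      rw [hz, hd z, if_neg (Ne.symm hxz), if_neg (Ne.symm hyz)] at this
      omega
    obtain ⟨f1', f2, hsum12, h1v, h1x, h1y, h2v, h2x, h2z⟩ :=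
      ih b f' x y z hxy hxz hyz hf'nadj hf'0 hf'x hf'y hf'z
    refine ⟨fun u v => f1' u v + d u v, f2, ?_, ?_, ?_, ?_, h2v, h2x, h2z⟩
    · intro u v
      have h1 := hsum12 u v
      have h2 := hfd u v
      show f1' u v + d u v + f2 u v = f u v
      omega
    · intro v hvx hvy
      rw [ndivg_add, h1v v hvx hvy, hd v, if_neg hvx, if_neg hvy]
      ring
    · rw [ndivg_add, h1x, hd x, if_pos rfl, if_neg hxy]
      push_cast
      ring
    · rw [ndivg_add, h1y, hd y, if_neg (Ne.symm hxy), if_pos rfl]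
      push_cast
      ring

lemma filter_mem_singleton (x : V) {inst : DecidablePred (· ∈ ({x} : Set V))} :
    @Finset.filter V (· ∈ ({x} : Set V)) inst Finset.univ = {x} := by ext v; simp

lemma filter_mem_pair (x z : V) {inst : DecidablePred (· ∈ ({x, z} : Set V))} :
    @Finset.filter V (· ∈ ({x, z} : Set V)) inst Finset.univ = ({x, z} : Finset V) := by
  ext v; simp

lemma feas_zero : Feas G c (fun _ _ => 0) :=
  ⟨fun _ _ _ => rfl, fun u v _ => by simp⟩

lemma phaseA (x y : V) (hxy : x ≠ y) (τ : ℕ)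
    (hτ : IsLeast {n | ∃ K, IsSTCut G {x} {y} K ∧ cutCap c K = n} τ) :
    ∃ fA : V → V → ℕ, Feas G c fA ∧
      ¬ Relation.ReflTransGen (rres G c fA) x y ∧
      (∀ v, v ≠ x → v ≠ y → ndivg fA v = 0) ∧
      ndivg fA x = (τ : ℤ) ∧ ndivg fA y = -(τ : ℤ) := by
  obtain ⟨fA, m, hF, hNR, h0', hxv, hyv⟩ :=
    maxaug G c x y hxy ((∑ w, (c s(x, w) : ℤ)) - ndivg (fun _ _ => 0) x).toNat
      (fun _ _ => 0) (feas_zero G c) (Int.self_le_toNat _)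
  have h0 : ∀ v, v ≠ x → v ≠ y → ndivg fA v = 0 := by
    intro v hvx hvy
    rw [h0' v hvx hvy, ndivg_zero]
  rw [ndivg_zero] at hxv hyv
  have hxm : ndivg fA x = (m : ℤ) := by omega
  have hym : ndivg fA y = -(m : ℤ) := by omega
  -- m ≤ τ
  obtain ⟨K0, hK0cut, hK0cap⟩ := hτ.1
  have hwd := weakdual G c hF {x} {y} (fun v hvx hvy =>
    h0 v (fun h => hvx (h ▸ Set.mem_singleton x)) (fun h => hvy (h ▸ Set.mem_singleton y)))
    hK0cut
  rw [filter_mem_singleton, Finset.sum_singleton, hxm, hK0cap] at hwd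
  -- τ ≤ m via cutsat
  obtain ⟨K, hKsub, hKpath, hKcap⟩ := cutsat G c hF ({x} : Set V)
  have hxR : x ∈ RsetS G c fA {x} :=
    (mem_RsetS G c).mpr ⟨x, Set.mem_singleton x, Relation.ReflTransGen.refl⟩
  have hyR : y ∉ RsetS G c fA {x} := by
    intro hmem
    obtain ⟨s, hs, hrtg⟩ := (mem_RsetS G c).mp hmem
    rw [Set.mem_singleton_iff] at hs
    exact hNR (hs ▸ hrtg)
  have hsum : ∑ v ∈ RsetS G c fA {x}, ndivg fA v = ndivg fA x := by
    refine Finset.sum_eq_single_of_mem x hxR ?_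
    intro v hv hvx
    refine h0 v hvx (fun hvy => hyR (hvy ▸ hv))
  have hcut : IsSTCut G {x} {y} (↑K : Set (Sym2 V)) := by
    refine ⟨hKsub, ?_⟩
    intro u v hu hv p _
    rw [Set.mem_singleton_iff] at hu hv
    subst hu; subst hv
    obtain ⟨e, he, heK⟩ := hKpath u v p hxR hyR
    exact ⟨e, he, heK⟩
  have hτle : τ ≤ cutCap c (↑K : Set (Sym2 V)) := hτ.2 ⟨↑K, hcut, rfl⟩
  rw [hsum, hxm] at hKcap
  have : m = τ := by omega
  subst this
  exact ⟨fA, hF, hNR, h0, hxm, hym⟩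

lemma partI_core (x y z : V) (hxy : x ≠ y) (hyz : y ≠ z) (hxz : x ≠ z)
    (τx τ : ℕ)
    (hτx : IsLeast {n | ∃ K, IsSTCut G {x} {z, y} K ∧ cutCap c K = n} τx)
    (hτ : IsLeast {n | ∃ K, IsSTCut G {x} {y} K ∧ cutCap c K = n} τ) :
    (τ : ℤ) ≤ τx ∧
    ∃ f f1 f2 : V → V → ℕ, Feas G c f ∧ (∀ u v, f1 u v + f2 u v = f u v) ∧
      (∀ v, v ≠ x → v ≠ y → v ≠ z → ndivg f v = 0) ∧
      ndivg f x = (τx : ℤ) ∧ ndivg f y = -(τ : ℤ) ∧ ndivg f z = -((τx : ℤ) - τ) ∧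
      (∀ v, v ≠ x → v ≠ y → ndivg f1 v = 0) ∧ ndivg f1 x = (τ : ℤ) ∧
        ndivg f1 y = -(τ : ℤ) ∧
      (∀ v, v ≠ x → v ≠ z → ndivg f2 v = 0) ∧ ndivg f2 x = (τx : ℤ) - τ ∧
        ndivg f2 z = -((τx : ℤ) - τ) := by
  obtain ⟨fA, hFA, hNRA, h0A, hxA, hyA⟩ := phaseA G c x y hxy τ hτ
  obtain ⟨f, m, hF, hNR, h0', hxv, hzv⟩ :=
    maxaug G c x z hxz ((∑ w, (c s(x, w) : ℤ)) - ndivg fA x).toNat fA hFA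
      (Int.self_le_toNat _)
  have h0 : ∀ v, v ≠ x → v ≠ y → v ≠ z → ndivg f v = 0 := by
    intro v hvx hvy hvz
    rw [h0' v hvx hvz]
    exact h0A v hvx hvy
  have hyv : ndivg f y = -(τ : ℤ) := by
    rw [h0' y (Ne.symm hxy) hyz, hyA]
  have hxm : ndivg f x = (τ : ℤ) + m := by rw [hxv, hxA]
  have hzm : ndivg f z = -(m : ℤ) := by
    rw [hzv, h0A z (Ne.symm hxz) (Ne.symm hyz)]
    ring
  -- no residual x-y path
  obtain ⟨K0, hK0cut, hK0cap⟩ := hτ.1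
  have hNRy : ¬ Relation.ReflTransGen (rres G c f) x y := by
    intro hr
    obtain ⟨f₁, hf₁, hdiv₁⟩ := augment_of_reach G c hF hr
    have hx₁ : ndivg f₁ x = ((τ + 1 : ℕ) : ℤ) + m := by
      rw [hdiv₁ x, if_pos rfl, if_neg hxy, hxm]; push_cast; ring
    have hy₁ : ndivg f₁ y = -((τ + 1 : ℕ) : ℤ) := by
      rw [hdiv₁ y, if_neg (Ne.symm hxy), if_pos rfl, hyv]; push_cast; ring
    have hz₁ : ndivg f₁ z = -(m : ℤ) := by
      rw [hdiv₁ z, if_neg (Ne.symm hxz), if_neg (Ne.symm hyz), hzm]; ring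
    have h0₁ : ∀ v, v ≠ x → v ≠ y → v ≠ z → ndivg f₁ v = 0 := by
      intro v hvx hvy hvz
      rw [hdiv₁ v, if_neg hvx, if_neg hvy, h0 v hvx hvy hvz]; ring
    obtain ⟨g1, g2, hg12, hg1v, hg1x, hg1y, _, _, _⟩ :=
      decomp G (τ + 1) m f₁ x y z hxy hxz hyz hf₁.1 h0₁ hx₁ hy₁ hz₁
    have hg1feas : Feas G c g1 := by
      constructor
      · intro u v h
        have h1 := hg12 u v
        have h2 := hf₁.1 u v h
        omega
      · intro u v h
        have h1 := hg12 u v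
        have h2 := hg12 v u
        have h3 := hf₁.2 u v h
        omega
    have hwd := weakdual G c hg1feas {x} {y} (fun v hvx hvy =>
      hg1v v (fun h => hvx (h ▸ Set.mem_singleton x))
        (fun h => hvy (h ▸ Set.mem_singleton y))) hK0cut
    rw [filter_mem_singleton, Finset.sum_singleton, hg1x, hK0cap] at hwd
    push_cast at hwd
    omega
  -- the saturated cut
  obtain ⟨K, hKsub, hKpath, hKcap⟩ := cutsat G c hF ({x} : Set V)
  have hxR : x ∈ RsetS G c f {x} :=
    (mem_RsetS G c).mpr ⟨x, Set.mem_singleton x, Relation.ReflTransGen.refl⟩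
  have hnotR : ∀ v, ¬ Relation.ReflTransGen (rres G c f) x v → v ∉ RsetS G c f {x} := by
    intro v hnr hmem
    obtain ⟨s, hs, hrtg⟩ := (mem_RsetS G c).mp hmem
    rw [Set.mem_singleton_iff] at hs
    exact hnr (hs ▸ hrtg)
  have hyR : y ∉ RsetS G c f {x} := hnotR y hNRy
  have hzR : z ∉ RsetS G c f {x} := hnotR z hNR
  have hsum : ∑ v ∈ RsetS G c f {x}, ndivg f v = ndivg f x := by
    refine Finset.sum_eq_single_of_mem x hxR ?_
    intro v hv hvx
    exact h0 v hvx (fun hvy => hyR (hvy ▸ hv)) (fun hvz => hzR (hvz ▸ hv))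
  have hcut : IsSTCut G {x} {z, y} (↑K : Set (Sym2 V)) := by
    refine ⟨hKsub, ?_⟩
    intro u v hu hv p _
    rw [Set.mem_singleton_iff] at hu
    subst hu
    rcases Set.mem_insert_iff.mp hv with rfl | hv2
    · exact hKpath u v p hxR hzR
    · rw [Set.mem_singleton_iff] at hv2
      subst hv2
      exact hKpath u v p hxR hyR
  have hτxle : τx ≤ cutCap c (↑K : Set (Sym2 V)) := hτx.2 ⟨↑K, hcut, rfl⟩
  rw [hsum, hxm] at hKcap
  -- weak duality against hτx's cut
  obtain ⟨Kx, hKxcut, hKxcap⟩ := hτx.1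
  have hshape : ∀ v, v ∉ ({x} : Set V) → v ∉ ({z, y} : Set V) → ndivg f v = 0 := by
    intro v hvx hv
    simp only [Set.mem_singleton_iff, Set.mem_insert_iff, not_or] at hvx hv
    exact h0 v hvx hv.2 hv.1
  have hwd := weakdual G c hF {x} {z, y} hshape hKxcut
  rw [filter_mem_singleton, Finset.sum_singleton, hxm, hKxcap] at hwd
  have hmval : (m : ℤ) = (τx : ℤ) - τ := by omega
  have hτleτx : (τ : ℤ) ≤ τx := by omega
  refine ⟨hτleτx, ?_⟩
  obtain ⟨f1, f2, hsum12, h1v, h1x, h1y, h2v, h2x, h2z⟩ :=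
    decomp G τ m f x y z hxy hxz hyz hF.1 h0 (by rw [hxm]) hyv hzm
  exact ⟨f, f1, f2, hF, hsum12, h0, by omega, hyv, by omega, h1v, h1x, h1y, h2v,
    by omega, by omega⟩

lemma partII_core (x y z : V) (hxy : x ≠ y) (hyz : y ≠ z) (hxz : x ≠ z)
    (τy τ : ℕ)
    (hτy : IsLeast {n | ∃ K, IsSTCut G {x, z} {y} K ∧ cutCap c K = n} τy)
    (hτ : IsLeast {n | ∃ K, IsSTCut G {x} {y} K ∧ cutCap c K = n} τ) :
    (τ : ℤ) ≤ τy ∧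
    ∃ g g1 g2 : V → V → ℕ, Feas G c g ∧ (∀ u v, g1 u v + g2 u v = g u v) ∧
      (∀ v, v ≠ x → v ≠ y → v ≠ z → ndivg g v = 0) ∧
      ndivg g x = (τ : ℤ) ∧ ndivg g y = -(τy : ℤ) ∧ ndivg g z = (τy : ℤ) - τ ∧
      (∀ v, v ≠ x → v ≠ y → ndivg g1 v = 0) ∧ ndivg g1 x = (τ : ℤ) ∧
        ndivg g1 y = -(τ : ℤ) ∧
      (∀ v, v ≠ z → v ≠ y → ndivg g2 v = 0) ∧ ndivg g2 z = (τy : ℤ) - τ ∧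
        ndivg g2 y = -((τy : ℤ) - τ) := by
  obtain ⟨fA, hFA, hNRA, h0A, hxA, hyA⟩ := phaseA G c x y hxy τ hτ
  obtain ⟨g, m, hF, hNR, h0', hzv, hyv'⟩ :=
    maxaug G c z y (Ne.symm hyz) ((∑ w, (c s(z, w) : ℤ)) - ndivg fA z).toNat fA hFA
      (Int.self_le_toNat _)
  have h0 : ∀ v, v ≠ x → v ≠ y → v ≠ z → ndivg g v = 0 := by
    intro v hvx hvy hvz
    rw [h0' v hvz hvy]
    exact h0A v hvx hvy
  have hxm : ndivg g x = (τ : ℤ) := by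
    rw [h0' x hxz hxy, hxA]
  have hzm : ndivg g z = (m : ℤ) := by
    rw [hzv, h0A z (Ne.symm hxz) (Ne.symm hyz)]
    ring
  have hym : ndivg g y = -(τ : ℤ) - m := by
    rw [hyv', hyA]
  obtain ⟨K0, hK0cut, hK0cap⟩ := hτ.1
  -- no residual x-y path
  have hNRy : ¬ Relation.ReflTransGen (rres G c g) x y := by
    intro hr
    obtain ⟨g₁, hg₁, hdiv₁⟩ := augment_of_reach G c hF hr
    have hx₁ : ndivg g₁ x = (τ : ℤ) + 1 := by
      rw [hdiv₁ x, if_pos rfl, if_neg hxy, hxm]; ring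
    have hy₁ : ndivg g₁ y = -((τ : ℤ) + 1) - m := by
      rw [hdiv₁ y, if_neg (Ne.symm hxy), if_pos rfl, hym]; ring
    have hz₁ : ndivg g₁ z = (m : ℤ) := by
      rw [hdiv₁ z, if_neg (Ne.symm hxz), if_neg (Ne.symm hyz), hzm]; ring
    have h0₁ : ∀ v, v ≠ x → v ≠ y → v ≠ z → ndivg g₁ v = 0 := by
      intro v hvx hvy hvz
      rw [hdiv₁ v, if_neg hvx, if_neg hvy, h0 v hvx hvy hvz]; ring
    -- transpose and decompose
    set gT : V → V → ℕ := fun p q => g₁ q p with hgT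
    have hgTnadj : ∀ u v, ¬ G.Adj u v → gT u v = 0 := by
      intro u v h
      exact hg₁.1 v u (fun hh => h hh.symm)
    have hgT0 : ∀ v, v ≠ y → v ≠ x → v ≠ z → ndivg gT v = 0 := by
      intro v hvy hvx hvz
      rw [hgT]
      rw [ndivg_transpose, h0₁ v hvx hvy hvz]
      ring
    have hgTy : ndivg gT y = ((τ + 1 : ℕ) : ℤ) + m := by
      rw [hgT, ndivg_transpose, hy₁]; push_cast; ring
    have hgTx : ndivg gT x = -((τ + 1 : ℕ) : ℤ) := by
      rw [hgT, ndivg_transpose, hx₁]; push_cast; ring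
    have hgTz : ndivg gT z = -(m : ℤ) := by
      rw [hgT, ndivg_transpose, hz₁]
    obtain ⟨h1, h2, hh12, hh1v, hh1y, hh1x, _, _, _⟩ :=
      decomp G (τ + 1) m gT y x z (Ne.symm hxy) hyz hxz hgTnadj hgT0 hgTy hgTx hgTz
    -- h1 is a y→x flow of value τ+1; transpose to get x→y flow
    have hfeas : Feas G c (fun p q => h1 q p) := by
      constructor
      · intro u v h
        show h1 v u = 0
        have h1' := hh12 v u
        have h2' := hgTnadj v u (fun hh => h hh.symm)
        omega
      · intro u v h
        show h1 v u + h1 u v ≤ c s(u, v)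
        have ha := hh12 v u
        have hb := hh12 u v
        have hc' := hg₁.2 u v h
        have hd' : gT v u = g₁ u v := rfl
        have he' : gT u v = g₁ v u := rfl
        omega
    have hshape : ∀ v, v ∉ ({x} : Set V) → v ∉ ({y} : Set V) →
        ndivg (fun p q => h1 q p) v = 0 := by
      intro v hvx hvy
      rw [Set.mem_singleton_iff] at hvx hvy
      rw [ndivg_transpose, hh1v v hvy hvx]
      ring
    have hwd := weakdual G c hfeas {x} {y} hshape hK0cut
    have hx1T : ndivg (fun p q => h1 q p) x = ((τ + 1 : ℕ) : ℤ) := by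
      rw [ndivg_transpose, hh1x]; push_cast; ring
    rw [filter_mem_singleton, Finset.sum_singleton, hx1T, hK0cap] at hwd
    push_cast at hwd
    omega
  -- saturated cut from {x, z}
  obtain ⟨K, hKsub, hKpath, hKcap⟩ := cutsat G c hF ({x, z} : Set V)
  have hxR : x ∈ RsetS G c g {x, z} :=
    (mem_RsetS G c).mpr ⟨x, Set.mem_insert x {z}, Relation.ReflTransGen.refl⟩
  have hzR : z ∈ RsetS G c g {x, z} :=
    (mem_RsetS G c).mpr ⟨z, by right; rfl, Relation.ReflTransGen.refl⟩
  have hyR : y ∉ RsetS G c g {x, z} := by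
    intro hmem
    obtain ⟨s, hs, hrtg⟩ := (mem_RsetS G c).mp hmem
    rcases Set.mem_insert_iff.mp hs with rfl | hs2
    · exact hNRy hrtg
    · rw [Set.mem_singleton_iff] at hs2
      exact hNR (hs2 ▸ hrtg)
  have hsum : ∑ v ∈ RsetS G c g {x, z}, ndivg g v = ndivg g x + ndivg g z := by
    rw [← Finset.sum_pair hxz]
    refine (Finset.sum_subset ?_ ?_).symm
    · intro v hv
      rcases Finset.mem_insert.mp hv with rfl | hv2
      · exact hxR
      · rw [Finset.mem_singleton] at hv2
        exact hv2 ▸ hzR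
    · intro v hv hnv
      rw [Finset.mem_insert, Finset.mem_singleton] at hnv
      push_neg at hnv
      exact h0 v hnv.1 (fun hvy => hyR (hvy ▸ hv)) hnv.2
  have hcut : IsSTCut G {x, z} {y} (↑K : Set (Sym2 V)) := by
    refine ⟨hKsub, ?_⟩
    intro u v hu hv p _
    rw [Set.mem_singleton_iff] at hv
    subst hv
    rcases Set.mem_insert_iff.mp hu with rfl | hu2
    · exact hKpath u v p hxR hyR
    · rw [Set.mem_singleton_iff] at hu2
      subst hu2
      exact hKpath u v p hzR hyR
  have hτyle : τy ≤ cutCap c (↑K : Set (Sym2 V)) := hτy.2 ⟨↑K, hcut, rfl⟩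
  rw [hsum, hxm, hzm] at hKcap
  obtain ⟨Ky, hKycut, hKycap⟩ := hτy.1
  have hshape2 : ∀ v, v ∉ ({x, z} : Set V) → v ∉ ({y} : Set V) → ndivg g v = 0 := by
    intro v hv hvy
    simp only [Set.mem_singleton_iff, Set.mem_insert_iff, not_or] at hv hvy
    exact h0 v hv.1 hvy hv.2
  have hwd := weakdual G c hF {x, z} {y} hshape2 hKycut
  rw [filter_mem_pair, Finset.sum_pair hxz, hxm, hzm, hKycap] at hwd
  have hmval : (m : ℤ) = (τy : ℤ) - τ := by omega
  have hτle : (τ : ℤ) ≤ τy := by omega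
  refine ⟨hτle, ?_⟩
  -- decompose transpose of g
  set gT : V → V → ℕ := fun p q => g q p with hgT
  have hgTnadj : ∀ u v, ¬ G.Adj u v → gT u v = 0 := by
    intro u v h
    exact hF.1 v u (fun hh => h hh.symm)
  have hgT0 : ∀ v, v ≠ y → v ≠ x → v ≠ z → ndivg gT v = 0 := by
    intro v hvy hvx hvz
    rw [hgT, ndivg_transpose, h0 v hvx hvy hvz]; ring
  have hgTy : ndivg gT y = (τ : ℤ) + m := by
    rw [hgT, ndivg_transpose, hym]; ring
  have hgTx : ndivg gT x = -(τ : ℤ) := by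
    rw [hgT, ndivg_transpose, hxm]
  have hgTz : ndivg gT z = -(m : ℤ) := by
    rw [hgT, ndivg_transpose, hzm]
  obtain ⟨h1, h2, hh12, hh1v, hh1y, hh1x, hh2v, hh2y, hh2z⟩ :=
    decomp G τ m gT y x z (Ne.symm hxy) hyz hxz hgTnadj hgT0 hgTy hgTx hgTz
  refine ⟨g, fun p q => h1 q p, fun p q => h2 q p, hF, ?_, h0, hxm, by omega, by omega,
    ?_, ?_, ?_, ?_, ?_, ?_⟩
  · intro u v
    show h1 v u + h2 v u = g u v
    have h1' := hh12 v u
    have h2' : gT v u = g u v := rfl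
    omega
  · intro v hvx hvy
    have ha := ndivg_transpose h1 v
    have hb := hh1v v hvy hvx
    omega
  · have ha := ndivg_transpose h1 x
    omega
  · have ha := ndivg_transpose h1 y
    omega
  · intro v hvz hvy
    have ha := ndivg_transpose h2 v
    have hb := hh2v v hvy hvz
    omega
  · have ha := ndivg_transpose h2 z
    omega
  · have ha := ndivg_transpose h2 y
    omega

lemma min_le_tau (x y z : V) (τx τy τ : ℕ)
    (hτx : IsLeast {n | ∃ K, IsSTCut G {x} {z, y} K ∧ cutCap c K = n} τx)
    (hτy : IsLeast {n | ∃ K, IsSTCut G {x, z} {y} K ∧ cutCap c K = n} τy)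
    (hτ : IsLeast {n | ∃ K, IsSTCut G {x} {y} K ∧ cutCap c K = n} τ) :
    τx ≤ τ ∨ τy ≤ τ := by
  obtain ⟨K, hK, hcap⟩ := hτ.1
  by_cases hz : ∃ p : G.Walk x z, ∀ e ∈ p.edges, e ∉ K
  · right
    have hcut : IsSTCut G {x, z} {y} K := by
      refine ⟨hK.1, ?_⟩
      intro u v hu hv p hp
      rw [Set.mem_singleton_iff] at hv
      subst hv
      rcases Set.mem_insert_iff.mp hu with rfl | hu2
      · exact hK.2 u v (Set.mem_singleton u) (Set.mem_singleton v) p hp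
      · rw [Set.mem_singleton_iff] at hu2
        subst hu2
        by_contra hno
        push_neg at hno
        obtain ⟨q, hq⟩ := hz
        obtain ⟨e, he, heK⟩ := hK.2 x v (Set.mem_singleton x) (Set.mem_singleton v)
          ((q.append p).bypass) ((q.append p).bypass_isPath)
        have he2 : e ∈ (q.append p).edges := (q.append p).edges_bypass_subset he
        rw [SimpleGraph.Walk.edges_append, List.mem_append] at he2
        rcases he2 with h | h
        · exact hq e h heK
        · exact hno e h heK
    have := hτy.2 ⟨K, hcut, hcap⟩
    omega
  · left
    push_neg at hz
    have hcut : IsSTCut G {x} {z, y} K := by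
      refine ⟨hK.1, ?_⟩
      intro u v hu hv p hp
      rw [Set.mem_singleton_iff] at hu
      subst hu
      rcases Set.mem_insert_iff.mp hv with rfl | hv2
      · exact hz p
      · rw [Set.mem_singleton_iff] at hv2
        subst hv2
        exact hK.2 u v (Set.mem_singleton u) (Set.mem_singleton v) p hp
    have := hτx.2 ⟨K, hcut, hcap⟩
    omega

lemma divg_cast (f : V → V → ℕ) (v : V) :
    divg (fun u w => (f u w : ℝ)) v = ((ndivg f v : ℤ) : ℝ) := by
  show (∑ w, ((f v w : ℕ) : ℝ)) - (∑ w, ((f w v : ℕ) : ℝ)) = _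
  rw [ndivg]
  push_cast
  ring

lemma toArcFlow {f : V → V → ℕ} (hFeas : Feas G c f) (S T : Set V)
    (h0 : ∀ v, v ∉ S → v ∉ T → ndivg f v = 0)
    (hS : ∀ v ∈ S, 0 ≤ ndivg f v) (hT : ∀ v ∈ T, ndivg f v ≤ 0) :
    IsArcFlow G c S T (fun u v => (f u v : ℝ)) := by
  refine ⟨fun u v => by positivity,
    fun u v h => by show ((f u v : ℕ) : ℝ) = 0; rw [hFeas.1 u v h]; simp,
    fun u v h => ?_, fun v hvS hvT => ?_, fun v hv => ?_, fun v hv => ?_⟩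
  · show ((f u v : ℕ) : ℝ) + ((f v u : ℕ) : ℝ) ≤ ((c s(u, v) : ℕ) : ℝ)
    exact_mod_cast hFeas.2 u v h
  · rw [divg_cast, h0 v hvS hvT]; simp
  · rw [divg_cast]; exact_mod_cast hS v hv
  · rw [divg_cast]; exact_mod_cast hT v hv

lemma integral_cast (f : V → V → ℕ) : IsIntegralArc (fun u v => (f u v : ℝ)) :=
  fun u v => ⟨f u v, by push_cast; rfl⟩

lemma flowVal_singleton (x : V) (fR : V → V → ℝ) :
    flowVal {x} fR = divg fR x := by
  simp only [flowVal]
  exact finsum_mem_singleton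

lemma flowVal_pair {x z : V} (h : x ≠ z) (fR : V → V → ℝ) :
    flowVal {x, z} fR = divg fR x + divg fR z := by
  simp only [flowVal]
  exact finsum_mem_pair h

lemma feas_of_le {f g : V → V → ℕ} (hF : Feas G c f)
    (hle : ∀ u v, g u v ≤ f u v) : Feas G c g := by
  constructor
  · intro u v h
    have := hF.1 u v h
    have := hle u v
    omega
  · intro u v h
    have := hF.2 u v h
    have := hle u v
    have := hle v u
    omega

end Triflow

end

/-- the triflow lemma. -/
theorem triflow_lemma
    {V : Type} [Fintype V] (G : SimpleGraph V) (x y z : V)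
    (hxy : x ≠ y) (hyz : y ≠ z) (hxz : x ≠ z) (c : Sym2 V → ℕ)
    (τx τy τ : ℕ)
    (hτx : IsLeast {n | ∃ K, IsSTCut G {x} {z, y} K ∧ cutCap c K = n} τx)
    (hτy : IsLeast {n | ∃ K, IsSTCut G {x, z} {y} K ∧ cutCap c K = n} τy)
    (hτ : IsLeast {n | ∃ K, IsSTCut G {x} {y} K ∧ cutCap c K = n} τ) :
    τ = min τx τy ∧
    -- (i)
    (∃ f f₁ f₂ : V → V → ℝ,
      IsArcFlow G c {x} {z, y} f ∧ IsIntegralArc f ∧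
      IsArcFlow G c {x} {y} f₁ ∧ IsIntegralArc f₁ ∧
      IsArcFlow G c {x} {z} f₂ ∧ IsIntegralArc f₂ ∧
      flowVal {x} f = (τx : ℝ) ∧ divg f x = (τx : ℝ) ∧
      flowVal {x} f₁ = (τ : ℝ) ∧ divg f y = -(τ : ℝ) ∧
      flowVal {x} f₂ = (τx : ℝ) - (τ : ℝ) ∧ divg f z = -((τx : ℝ) - (τ : ℝ)) ∧
      ∀ u v, f u v = f₁ u v + f₂ u v) ∧
    -- (ii)
    (∃ g g₁ g₂ : V → V → ℝ,
      IsArcFlow G c {x, z} {y} g ∧ IsIntegralArc g ∧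
      IsArcFlow G c {x} {y} g₁ ∧ IsIntegralArc g₁ ∧
      IsArcFlow G c {z} {y} g₂ ∧ IsIntegralArc g₂ ∧
      flowVal {x, z} g = (τy : ℝ) ∧ divg g y = -(τy : ℝ) ∧
      flowVal {x} g₁ = (τ : ℝ) ∧ divg g x = (τ : ℝ) ∧
      flowVal {z} g₂ = (τy : ℝ) - (τ : ℝ) ∧ divg g z = (τy : ℝ) - (τ : ℝ) ∧
      ∀ u v, g u v = g₁ u v + g₂ u v) := by
  obtain ⟨hτ1, f, f1, f2, hF, hsum, h0, hfx, hfy, hfz, h1v, h1x, h1y, h2v, h2x, h2z⟩ :=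
    Triflow.partI_core G c x y z hxy hyz hxz τx τ hτx hτ
  obtain ⟨hτ2, g, g1, g2, hG, hgsum, hg0, hgx, hgy, hgz, hg1v, hg1x, hg1y,
      hg2v, hg2z, hg2y⟩ :=
    Triflow.partII_core G c x y z hxy hyz hxz τy τ hτy hτ
  have hmin := Triflow.min_le_tau G c x y z τx τy τ hτx hτy hτ
  have hτ1' : τ ≤ τx := by exact_mod_cast hτ1
  have hτ2' : τ ≤ τy := by exact_mod_cast hτ2
  have hF1 : Triflow.Feas G c f1 :=
    Triflow.feas_of_le G c hF (fun u v => by have := hsum u v; omega)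
  have hF2 : Triflow.Feas G c f2 :=
    Triflow.feas_of_le G c hF (fun u v => by have := hsum u v; omega)
  have hG1 : Triflow.Feas G c g1 :=
    Triflow.feas_of_le G c hG (fun u v => by have := hgsum u v; omega)
  have hG2 : Triflow.Feas G c g2 :=
    Triflow.feas_of_le G c hG (fun u v => by have := hgsum u v; omega)
  refine ⟨by omega, ?_, ?_⟩
  · refine ⟨fun u v => (f u v : ℝ), fun u v => (f1 u v : ℝ), fun u v => (f2 u v : ℝ),
      ?_, Triflow.integral_cast f, ?_, Triflow.integral_cast f1,
      ?_, Triflow.integral_cast f2, ?_, ?_, ?_, ?_, ?_, ?_, ?_⟩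
    · refine Triflow.toArcFlow G c hF {x} {z, y} ?_ ?_ ?_
      · intro v hvx hv
        simp only [Set.mem_singleton_iff, Set.mem_insert_iff, not_or] at hvx hv
        exact h0 v hvx hv.2 hv.1
      · intro v hv
        rw [Set.mem_singleton_iff] at hv
        subst hv
        rw [hfx]
        positivity
      · intro v hv
        rcases Set.mem_insert_iff.mp hv with rfl | hv2
        · rw [hfz]; omega
        · rw [Set.mem_singleton_iff] at hv2
          subst hv2
          rw [hfy]; omega
    · refine Triflow.toArcFlow G c hF1 {x} {y} ?_ ?_ ?_
      · intro v hvx hvy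
        rw [Set.mem_singleton_iff] at hvx hvy
        exact h1v v hvx hvy
      · intro v hv
        rw [Set.mem_singleton_iff] at hv
        subst hv
        rw [h1x]; positivity
      · intro v hv
        rw [Set.mem_singleton_iff] at hv
        subst hv
        rw [h1y]; omega
    · refine Triflow.toArcFlow G c hF2 {x} {z} ?_ ?_ ?_
      · intro v hvx hvz
        rw [Set.mem_singleton_iff] at hvx hvz
        exact h2v v hvx hvz
      · intro v hv
        rw [Set.mem_singleton_iff] at hv
        subst hv
        rw [h2x]; omega
      · intro v hv
        rw [Set.mem_singleton_iff] at hv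
        subst hv
        rw [h2z]; omega
    · rw [Triflow.flowVal_singleton, Triflow.divg_cast, hfx]
      norm_cast
    · rw [Triflow.divg_cast, hfx]
      norm_cast
    · rw [Triflow.flowVal_singleton, Triflow.divg_cast, h1x]
      norm_cast
    · rw [Triflow.divg_cast, hfy]
      push_cast
      ring
    · rw [Triflow.flowVal_singleton, Triflow.divg_cast, h2x]
      push_cast
      ring
    · rw [Triflow.divg_cast, hfz]
      push_cast
      ring
    · intro u v
      have h := hsum u v
      show ((f u v : ℕ) : ℝ) = ((f1 u v : ℕ) : ℝ) + ((f2 u v : ℕ) : ℝ)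
      exact_mod_cast h.symm
  · refine ⟨fun u v => (g u v : ℝ), fun u v => (g1 u v : ℝ), fun u v => (g2 u v : ℝ),
      ?_, Triflow.integral_cast g, ?_, Triflow.integral_cast g1,
      ?_, Triflow.integral_cast g2, ?_, ?_, ?_, ?_, ?_, ?_, ?_⟩
    · refine Triflow.toArcFlow G c hG {x, z} {y} ?_ ?_ ?_
      · intro v hv hvy
        simp only [Set.mem_singleton_iff, Set.mem_insert_iff, not_or] at hv hvy
        exact hg0 v hv.1 hvy hv.2
      · intro v hv
        rcases Set.mem_insert_iff.mp hv with rfl | hv2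
        · rw [hgx]; positivity
        · rw [Set.mem_singleton_iff] at hv2
          subst hv2
          rw [hgz]; omega
      · intro v hv
        rw [Set.mem_singleton_iff] at hv
        subst hv
        rw [hgy]; omega
    · refine Triflow.toArcFlow G c hG1 {x} {y} ?_ ?_ ?_
      · intro v hvx hvy
        rw [Set.mem_singleton_iff] at hvx hvy
        exact hg1v v hvx hvy
      · intro v hv
        rw [Set.mem_singleton_iff] at hv
        subst hv
        rw [hg1x]; positivity
      · intro v hv
        rw [Set.mem_singleton_iff] at hv
        subst hv
        rw [hg1y]; omega
    · refine Triflow.toArcFlow G c hG2 {z} {y} ?_ ?_ ?_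
      · intro v hvz hvy
        rw [Set.mem_singleton_iff] at hvz hvy
        exact hg2v v hvz hvy
      · intro v hv
        rw [Set.mem_singleton_iff] at hv
        subst hv
        rw [hg2z]; omega
      · intro v hv
        rw [Set.mem_singleton_iff] at hv
        subst hv
        rw [hg2y]; omega
    · rw [Triflow.flowVal_pair hxz, Triflow.divg_cast, Triflow.divg_cast, hgx, hgz]
      push_cast
      ring
    · rw [Triflow.divg_cast, hgy]
      push_cast
      ring
    · rw [Triflow.flowVal_singleton, Triflow.divg_cast, hg1x]
      norm_cast
    · rw [Triflow.divg_cast, hgx]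
      norm_cast
    · rw [Triflow.flowVal_singleton, Triflow.divg_cast, hg2z]
      push_cast
      ring
    · rw [Triflow.divg_cast, hgz]
      push_cast
      ring
    · intro u v
      have h := hgsum u v
      show ((g u v : ℕ) : ℝ) = ((g1 u v : ℕ) : ℝ) + ((g2 u v : ℕ) : ℝ)
      exact_mod_cast h.symm
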